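/- arXiv:2406.06919 — 5 statements merged into one kernel-verified Lean document; each statement's English description precedes it below -/
import Mathlib

section
/- For every x ∈ ℝ² with x ≠ 0 and every r > 0 with r ≠ |x|, the average over the unit circle S¹ of ln(1/|rz − x|), i.e. (1/2π)∫_{S¹} ln(1/|rz−x|) dz, equals min(ln(1/r), ln(1/|x|)). -/
open Real

lemma aux_integral_log_norm (a : ℂ) (ha : ‖a‖ < 1) :
    ∫ θ in (0:ℝ)..(2*π), Real.log ‖1 - a * Complex.exp (θ * Complex.I)‖ = 0 := by
  set f : ℂ → ℂ := fun z => Complex.log (1 - a * z) with hf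
  have key : ∀ z : ℂ, ‖z‖ ≤ 1 → (1 - a * z) ∈ Complex.slitPlane := by
    intro z hz
    have : ‖-(a * z)‖ < 1 := by
      rw [norm_neg, norm_mul]
      calc ‖a‖ * ‖z‖ ≤ ‖a‖ * 1 := by
            exact mul_le_mul_of_nonneg_left hz (norm_nonneg a)
        _ = ‖a‖ := mul_one _
        _ < 1 := ha
    simpa [sub_eq_add_neg] using Complex.mem_slitPlane_of_norm_lt_one this
  have hd : DifferentiableOn ℂ f (Metric.closedBall 0 1) := by
    intro z hz
    have hz1 : ‖z‖ ≤ 1 := by simpa [Metric.mem_closedBall] using hz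
    exact ((Complex.differentiableAt_log (key z hz1)).comp z
      ((differentiableAt_const (1:ℂ)).sub
        ((differentiableAt_const a).mul differentiableAt_id))).differentiableWithinAt
  have hcauchy := hd.circleIntegral_sub_inv_smul (w := 0)
    (by simp : (0:ℂ) ∈ Metric.ball 0 1)
  have hf0 : f 0 = 0 := by simp [hf]
  rw [hf0, smul_zero] at hcauchy
  have hunfold : (∮ z in C(0, 1), (z - 0)⁻¹ • f z)
      = ∫ θ in (0:ℝ)..(2*π), Complex.I * f (Complex.exp (θ * Complex.I)) := by
    rw [circleIntegral]
    congr 1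
    ext θ
    have hne : Complex.exp (θ * Complex.I) ≠ 0 := Complex.exp_ne_zero _
    simp [deriv_circleMap, circleMap, smul_eq_mul]
    field_simp
  rw [hunfold] at hcauchy
  rw [intervalIntegral.integral_const_mul] at hcauchy
  have hint : ∫ θ in (0:ℝ)..(2*π), f (Complex.exp (θ * Complex.I)) = 0 := by
    have hI : Complex.I ≠ 0 := Complex.I_ne_zero
    exact (mul_eq_zero.mp hcauchy).resolve_left hI
  -- continuity
  have hcont : Continuous fun θ : ℝ => f (Complex.exp (θ * Complex.I)) := by
    rw [continuous_iff_continuousAt]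
    intro θ
    have hnorm : ‖Complex.exp (θ * Complex.I)‖ ≤ 1 := by
      rw [Complex.norm_exp_ofReal_mul_I]
    have hmem := key _ hnorm
    have hc : Continuous fun θ : ℝ => 1 - a * Complex.exp (θ * Complex.I) :=
      continuous_const.sub (continuous_const.mul
        (Complex.continuous_exp.comp (Complex.continuous_ofReal.mul continuous_const)))
    exact ContinuousAt.comp (g := Complex.log) (continuousAt_clog hmem) hc.continuousAt
  have hii : IntervalIntegrable (fun θ : ℝ => f (Complex.exp (θ * Complex.I)))
      MeasureTheory.volume 0 (2*π) := hcont.intervalIntegrable _ _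
  calc ∫ θ in (0:ℝ)..(2*π), Real.log ‖1 - a * Complex.exp (θ * Complex.I)‖
      = ∫ θ in (0:ℝ)..(2*π), Complex.reCLM (f (Complex.exp (θ * Complex.I))) := by
        apply intervalIntegral.integral_congr
        intro θ _
        simp [hf, Complex.log_re]
    _ = Complex.reCLM (∫ θ in (0:ℝ)..(2*π), f (Complex.exp (θ * Complex.I))) :=
        Complex.reCLM.intervalIntegral_comp_comm hii
    _ = 0 := by rw [hint]; simp

lemma aux_ne (a : ℂ) (ha : ‖a‖ < 1) (θ : ℝ) :
    ‖1 - a * Complex.exp (θ * Complex.I)‖ ≠ 0 := by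
  intro h
  rw [norm_eq_zero, sub_eq_zero] at h
  have : ‖a * Complex.exp (θ * Complex.I)‖ = 1 := by rw [← h]; simp
  rw [norm_mul, Complex.norm_exp_ofReal_mul_I,
    mul_one] at this
  exact absurd this (ne_of_lt ha)

lemma aux_cont (a : ℂ) (ha : ‖a‖ < 1) :
    Continuous fun θ : ℝ => Real.log ‖1 - a * Complex.exp (θ * Complex.I)‖ := by
  rw [continuous_iff_continuousAt]
  intro θ
  have hc : Continuous fun θ : ℝ => ‖1 - a * Complex.exp (θ * Complex.I)‖ :=
    (continuous_const.sub (continuous_const.mul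
      (Complex.continuous_exp.comp (Complex.continuous_ofReal.mul continuous_const)))).norm
  exact ContinuousAt.comp (g := Real.log)
    (Real.continuousAt_log (aux_ne a ha θ)) hc.continuousAt

lemma aux_avg (a : ℂ) (ha : ‖a‖ < 1) (c : ℝ) (hc : 0 < c) :
    (2 * π)⁻¹ * ∫ θ in (0 : ℝ)..(2 * π),
        Real.log (1 / (c * ‖1 - a * Complex.exp (θ * Complex.I)‖))
      = Real.log (1 / c) := by
  have hπ : (0:ℝ) < π := Real.pi_pos
  have heq : ∀ θ : ℝ, Real.log (1 / (c * ‖1 - a * Complex.exp (θ * Complex.I)‖))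
      = -(Real.log c + Real.log ‖1 - a * Complex.exp (θ * Complex.I)‖) := by
    intro θ
    rw [one_div, Real.log_inv, Real.log_mul (ne_of_gt hc) (aux_ne a ha θ)]
  rw [intervalIntegral.integral_congr (g := fun θ =>
      -(Real.log c + Real.log ‖1 - a * Complex.exp (θ * Complex.I)‖))
      (fun θ _ => heq θ)]
  rw [intervalIntegral.integral_neg, intervalIntegral.integral_add
    (intervalIntegrable_const) ((aux_cont a ha).intervalIntegrable _ _),
    aux_integral_log_norm a ha, intervalIntegral.integral_const]
  rw [one_div, Real.log_inv]
  field_simp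
  ring

/-- Newton's theorem for the planar logarithmic potential: for `x ≠ 0` and
`r > 0` with `r ≠ |x|`, the average over the unit circle of `ln(1/|rz − x|)`
equals `min(ln(1/r), ln(1/|x|))`. -/
theorem circle_average_log (x : ℂ) (hx : x ≠ 0) (r : ℝ) (hr : 0 < r)
    (hrx : r ≠ ‖x‖) :
    (2 * π)⁻¹ * ∫ θ in (0 : ℝ)..(2 * π),
        Real.log (1 / ‖(r : ℂ) * Complex.exp (θ * Complex.I) - x‖)
      = min (Real.log (1 / r)) (Real.log (1 / ‖x‖)) := by
  have hxn : (0:ℝ) < ‖x‖ := norm_pos_iff.mpr hx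
  rcases lt_or_gt_of_ne hrx with h | h
  · -- r < ‖x‖ : use a = r / x
    set a : ℂ := (r : ℂ) / x with hadef
    have ha : ‖a‖ < 1 := by
      rw [hadef, norm_div, Complex.norm_real, Real.norm_of_nonneg hr.le]
      rw [div_lt_one hxn]; exact h
    have hkey : ∀ θ : ℝ, ‖(r : ℂ) * Complex.exp (θ * Complex.I) - x‖
        = ‖x‖ * ‖1 - a * Complex.exp (θ * Complex.I)‖ := by
      intro θ
      have : (r : ℂ) * Complex.exp (θ * Complex.I) - x
          = (-x) * (1 - a * Complex.exp (θ * Complex.I)) := by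
        have hxr : x * ((r : ℂ) / x) = r := by field_simp
        rw [hadef]
        linear_combination (-Complex.exp (θ * Complex.I)) * hxr
      rw [this, norm_mul, norm_neg]
    have := aux_avg a ha ‖x‖ hxn
    rw [intervalIntegral.integral_congr (g := fun θ =>
      Real.log (1 / (‖x‖ * ‖1 - a * Complex.exp (θ * Complex.I)‖)))
      (fun θ _ => by rw [hkey θ]), this]
    rw [min_eq_right]
    apply Real.log_le_log (by positivity)
    rw [one_div, one_div]
    exact inv_anti₀ hr h.le
  · -- ‖x‖ < r : use a = conj x / r
    set a : ℂ := (starRingEnd ℂ) x / (r : ℂ) with hadef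
    have ha : ‖a‖ < 1 := by
      rw [hadef, norm_div, Complex.norm_real, Real.norm_of_nonneg hr.le,
        RCLike.norm_conj, div_lt_one hr]
      exact h
    have hkey : ∀ θ : ℝ, ‖(r : ℂ) * Complex.exp (θ * Complex.I) - x‖
        = r * ‖1 - a * Complex.exp (θ * Complex.I)‖ := by
      intro θ
      set E : ℂ := Complex.exp (θ * Complex.I) with hE
      have hEc : E * (starRingEnd ℂ) E = 1 := by
        rw [Complex.mul_conj]
        norm_cast
        rw [Complex.normSq_eq_norm_sq, hE, Complex.norm_exp_ofReal_mul_I, one_pow]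
      have hid : (r : ℂ) * E - x = E * (starRingEnd ℂ) ((r : ℂ) * (1 - a * E)) := by
        have hca : (starRingEnd ℂ) a = x / (r : ℂ) := by
          rw [hadef, map_div₀, Complex.conj_conj, Complex.conj_ofReal]
        rw [map_mul, map_sub, map_one, map_mul, hca, Complex.conj_ofReal]
        have hrne : (r : ℂ) ≠ 0 := by exact_mod_cast hr.ne'
        field_simp
        ring_nf
        linear_combination x * hEc
      rw [hid, norm_mul, RCLike.norm_conj, norm_mul, Complex.norm_real,
        Real.norm_of_nonneg hr.le, hE,
        Complex.norm_exp_ofReal_mul_I, one_mul]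
    have := aux_avg a ha r hr
    rw [intervalIntegral.integral_congr (g := fun θ =>
      Real.log (1 / (r * ‖1 - a * Complex.exp (θ * Complex.I)‖)))
      (fun θ _ => by rw [hkey θ]), this]
    rw [min_eq_left]
    apply Real.log_le_log (by positivity)
    rw [one_div, one_div]
    exact inv_anti₀ hxn h.le
end

section
/- For every x ∈ ℝ² with |x| = r > 0, the average over the unit circle of ln(1/|rz − x|) equals ln(1/|x|); that is, (1/2π)∫_{S¹} ln(1/|rz−x|) dz = ln(1/r), and in particular the integral is finite despite the logarithmic singularity at z = x/r. -/
open Real MeasureTheory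

lemma il_log01 : IntervalIntegrable Real.log volume 0 1 := by
  have hg : IntervalIntegrable (fun x : ℝ => 2 * x ^ (-(1/2) : ℝ)) volume 0 1 :=
    (intervalIntegral.intervalIntegrable_rpow' (by norm_num)).const_mul 2
  refine hg.mono_fun Real.measurable_log.aestronglyMeasurable ?_
  filter_upwards [ae_restrict_mem measurableSet_uIoc] with x hx
  rw [Set.uIoc_of_le zero_le_one] at hx
  obtain ⟨hx0, hx1⟩ := hx
  have hs : 0 < Real.sqrt x := Real.sqrt_pos.2 hx0
  have h1 : Real.log (Real.sqrt x)⁻¹ ≤ (Real.sqrt x)⁻¹ - 1 :=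
    Real.log_le_sub_one_of_pos (inv_pos.2 hs)
  rw [Real.log_inv] at h1
  have h2 : Real.log (Real.sqrt x) = Real.log x / 2 := Real.log_sqrt hx0.le
  have h3 : x ^ (-(1/2) : ℝ) = (Real.sqrt x)⁻¹ := by
    rw [Real.rpow_neg hx0.le, Real.sqrt_eq_rpow]
  have h4 : Real.log x ≤ 0 := Real.log_nonpos hx0.le hx1
  have h5 : (0:ℝ) ≤ 2 * x ^ (-(1/2) : ℝ) := by positivity
  rw [Real.norm_eq_abs, Real.norm_eq_abs, abs_of_nonpos h4, abs_of_nonneg h5, h3]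
  have : (0:ℝ) < (Real.sqrt x)⁻¹ := inv_pos.2 hs
  linarith

lemma il_log {b : ℝ} (hb : 0 < b) : IntervalIntegrable Real.log volume 0 b :=
  il_log01.trans (intervalIntegral.intervalIntegrable_log (fun h => by
    rcases Set.mem_uIcc.1 h with ⟨h1, _⟩ | ⟨_, h2⟩ <;> linarith))

lemma il_logsin_half : IntervalIntegrable (fun x => Real.log (Real.sin x)) volume 0 (π/2) := by
  have hmaj : IntervalIntegrable (fun x : ℝ => ‖Real.log x‖ + Real.log (π/2)) volume 0 (π/2) :=
    (il_log (by positivity)).norm.add (intervalIntegrable_const)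
  refine hmaj.mono_fun
    ((Real.measurable_log.comp Real.measurable_sin).aestronglyMeasurable) ?_
  filter_upwards [ae_restrict_mem measurableSet_uIoc] with x hx
  rw [Set.uIoc_of_le (by positivity : (0:ℝ) ≤ π/2)] at hx
  obtain ⟨hx0, hx1⟩ := hx
  have hsp : 0 < Real.sin x := Real.sin_pos_of_pos_of_lt_pi hx0 (by linarith [pi_pos])
  have hlow : 2/π * x ≤ Real.sin x := Real.mul_le_sin hx0.le hx1
  have h2p : (0:ℝ) < 2/π := by positivity
  have hls : Real.log (2/π * x) ≤ Real.log (Real.sin x) :=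
    Real.log_le_log (by positivity) hlow
  have hmul : Real.log (2/π * x) = Real.log (2/π) + Real.log x :=
    Real.log_mul (ne_of_gt h2p) (ne_of_gt hx0)
  have hinv : Real.log (2/π) = -Real.log (π/2) := by
    rw [show (2:ℝ)/π = (π/2)⁻¹ by field_simp, Real.log_inv]
  have hup : Real.log (Real.sin x) ≤ 0 := Real.log_nonpos hsp.le (Real.sin_le_one x)
  have hpi2 : (0:ℝ) ≤ Real.log (π/2) :=
    Real.log_nonneg (by nlinarith [pi_gt_three])
  simp only [Real.norm_eq_abs]
  rw [abs_of_nonpos hup,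
    abs_of_nonneg (by positivity : (0:ℝ) ≤ |Real.log x| + Real.log (π/2))]
  have : -Real.log x ≤ |Real.log x| := neg_le_abs _
  rw [hmul, hinv] at hls
  linarith

lemma il_logcos_half : IntervalIntegrable (fun x => Real.log (Real.cos x)) volume 0 (π/2) := by
  have h := (il_logsin_half.comp_sub_left (π/2)).symm
  simp only [sub_self, sub_zero] at h
  have heq : (fun x => Real.log (Real.sin (π/2 - x))) = fun x => Real.log (Real.cos x) := by
    funext x; rw [Real.sin_pi_div_two_sub]
  rwa [heq] at h

lemma il_logsin_pi : IntervalIntegrable (fun x => Real.log (Real.sin x)) volume 0 π := by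
  have h := (il_logsin_half.comp_sub_left π).symm
  simp only [sub_self, sub_zero] at h
  have heq : (fun x => Real.log (Real.sin (π - x))) = fun x => Real.log (Real.sin x) := by
    funext x; rw [Real.sin_pi_sub]
  rw [heq] at h
  have h2 : IntervalIntegrable (fun x => Real.log (Real.sin x)) volume (π/2) π := by
    have := h.mono_set (by rw [Set.uIcc_of_le (by linarith [pi_pos] : π/2 ≤ π),
      Set.uIcc_of_le (by linarith [pi_pos] : π - π/2 ≤ π)]; apply Set.Icc_subset_Icc <;> linarith)
    exact this
  exact il_logsin_half.trans h2

lemma logsin_symm : ∫ x in (π/2)..π, Real.log (Real.sin x)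
    = ∫ x in (0:ℝ)..(π/2), Real.log (Real.sin x) := by
  have h := intervalIntegral.integral_comp_sub_left
    (a := (0:ℝ)) (b := π/2) (fun x => Real.log (Real.sin x)) π
  simp only [sub_zero] at h
  rw [show π - π/2 = π/2 by ring] at h
  rw [← h]
  simp [Real.sin_pi_sub]

lemma logcos_eq : ∫ x in (0:ℝ)..(π/2), Real.log (Real.cos x)
    = ∫ x in (0:ℝ)..(π/2), Real.log (Real.sin x) := by
  have h := intervalIntegral.integral_comp_sub_left
    (a := (0:ℝ)) (b := π/2) (fun x => Real.log (Real.sin x)) (π/2)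
  simp only [sub_zero, sub_self] at h
  simp only [Real.sin_pi_div_two_sub] at h
  exact h

lemma il_logsin_upper : IntervalIntegrable (fun x => Real.log (Real.sin x)) volume (π/2) π := by
  have h := (il_logsin_half.comp_sub_left π).symm
  simp only [sub_self, sub_zero] at h
  have heq : (fun x => Real.log (Real.sin (π - x))) = fun x => Real.log (Real.sin x) := by
    funext x; rw [Real.sin_pi_sub]
  rw [heq] at h
  exact h.mono_set (by
    rw [Set.uIcc_of_le (by linarith [pi_pos] : π/2 ≤ π),
      Set.uIcc_of_le (by linarith [pi_pos] : π - π/2 ≤ π)]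
    apply Set.Icc_subset_Icc <;> linarith [pi_pos])

lemma integral_log_sin_pi : ∫ x in (0:ℝ)..π, Real.log (Real.sin x) = -(π * Real.log 2) := by
  have hpi := pi_pos
  have hsplit : ∫ x in (0:ℝ)..π, Real.log (Real.sin x)
      = 2 * ∫ x in (0:ℝ)..(π/2), Real.log (Real.sin x) := by
    rw [← intervalIntegral.integral_add_adjacent_intervals il_logsin_half il_logsin_upper,
      logsin_symm]
    ring
  have hdouble := intervalIntegral.integral_comp_mul_left
    (a := (0:ℝ)) (b := π/2) (fun x => Real.log (Real.sin x)) (two_ne_zero)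
  rw [mul_zero, show (2:ℝ) * (π/2) = π by ring] at hdouble
  -- hdouble : ∫ x in 0..π/2, log (sin (2*x)) = 2⁻¹ • ∫ x in 0..π, log sin x
  have hcongr : ∫ x in (0:ℝ)..(π/2), Real.log (Real.sin (2*x))
      = ∫ x in (0:ℝ)..(π/2), (Real.log 2 + Real.log (Real.sin x) + Real.log (Real.cos x)) := by
    apply intervalIntegral.integral_congr_ae
    have hne : ∀ᵐ x : ℝ, x ≠ π/2 := by
      rw [ae_iff]
      simp only [not_ne_iff, Set.setOf_eq_eq_singleton]
      exact measure_singleton _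
    filter_upwards [hne] with x hxne hx
    rw [Set.uIoc_of_le (by positivity : (0:ℝ) ≤ π/2)] at hx
    obtain ⟨hx0, hx1⟩ := hx
    have hx2 : x < π/2 := lt_of_le_of_ne hx1 hxne
    have hs : 0 < Real.sin x := Real.sin_pos_of_pos_of_lt_pi hx0 (by linarith)
    have hc : 0 < Real.cos x := Real.cos_pos_of_mem_Ioo ⟨by linarith, hx2⟩
    rw [Real.sin_two_mul, Real.log_mul (by positivity) (ne_of_gt hc),
      Real.log_mul (two_ne_zero) (ne_of_gt hs)]
  have hadd : ∫ x in (0:ℝ)..(π/2), (Real.log 2 + Real.log (Real.sin x) + Real.log (Real.cos x))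
      = π/2 * Real.log 2 + (∫ x in (0:ℝ)..(π/2), Real.log (Real.sin x))
        + ∫ x in (0:ℝ)..(π/2), Real.log (Real.cos x) := by
    rw [intervalIntegral.integral_add (intervalIntegrable_const.add il_logsin_half) il_logcos_half,
      intervalIntegral.integral_add intervalIntegrable_const il_logsin_half]
    simp [mul_comm]
  rw [hcongr, hadd, logcos_eq] at hdouble
  have := hsplit
  rw [smul_eq_mul] at hdouble
  linarith [hdouble, hsplit]

lemma chord (θ α : ℝ) : ‖Complex.exp (θ*Complex.I) - Complex.exp (α*Complex.I)‖
    = 2 * |Real.sin ((θ - α)/2)| := by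
  set w := Complex.exp (θ*Complex.I) - Complex.exp (α*Complex.I) with hw
  have hre : w.re = Real.cos θ - Real.cos α := by
    simp [hw, Complex.exp_ofReal_mul_I_re]
  have him : w.im = Real.sin θ - Real.sin α := by
    simp [hw, Complex.exp_ofReal_mul_I_im]
  have hsq : ‖w‖^2 = (2 * |Real.sin ((θ - α)/2)|)^2 := by
    rw [Complex.sq_norm, Complex.normSq_apply, hre, him]
    have h1 := Real.sin_sq_add_cos_sq θ
    have h2 := Real.sin_sq_add_cos_sq α
    have h3 := Real.cos_sub θ α
    have h4 : Real.sin ((θ - α)/2)^2 = 1/2 - Real.cos (2 * ((θ - α)/2)) / 2 :=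
      Real.sin_sq_eq_half_sub _
    rw [show 2*((θ-α)/2) = θ - α by ring] at h4
    have h5 : |Real.sin ((θ - α)/2)|^2 = Real.sin ((θ - α)/2)^2 := sq_abs _
    nlinarith
  have h1 : (0:ℝ) ≤ ‖w‖ := norm_nonneg _
  have h2 : (0:ℝ) ≤ 2 * |Real.sin ((θ - α)/2)| := by positivity
  nlinarith [hsq]

lemma il_logabssin : IntervalIntegrable (fun x => Real.log |Real.sin x|) volume (-π) (2*π) := by
  have hbase : IntervalIntegrable (fun x => Real.log |Real.sin x|) volume 0 π := by
    have hb := il_logsin_pi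
    rw [intervalIntegrable_iff] at hb ⊢
    refine hb.congr_fun (fun x hx => ?_) measurableSet_uIoc
    rw [Set.uIoc_of_le pi_pos.le] at hx
    rw [abs_of_nonneg (Real.sin_nonneg_of_nonneg_of_le_pi hx.1.le hx.2)]
  have hneg : IntervalIntegrable (fun x => Real.log |Real.sin x|) volume (-π) 0 := by
    have h := (hbase.comp_mul_left (c := -1))
    simp only [neg_one_mul, zero_div, div_neg, div_one] at h
    have heq : (fun x : ℝ => Real.log |Real.sin (-x)|) = fun x => Real.log |Real.sin x| := by
      funext x; rw [Real.sin_neg, abs_neg]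
    rw [heq] at h
    simpa using h.symm
  have hupper : IntervalIntegrable (fun x => Real.log |Real.sin x|) volume π (2*π) := by
    have h := hbase.comp_sub_right π
    simp only [zero_add] at h
    have heq : (fun x : ℝ => Real.log |Real.sin (x - π)|) = fun x => Real.log |Real.sin x| := by
      funext x; rw [Real.sin_sub_pi, abs_neg]
    rw [heq, show π + π = 2*π by ring] at h
    exact h
  exact (hneg.trans hbase).trans hupper


/-- For `|x| = r > 0`, the circle average of `ln(1/|rz−x|)` equals `ln(1/r)`;
in particular the integral is finite despite the logarithmic singularity. -/
theorem circle_average_log_boundary (x : ℂ) (r : ℝ) (hr : 0 < r)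
    (hx : ‖x‖ = r) :
    IntervalIntegrable
      (fun θ : ℝ => Real.log (1 / ‖(r : ℂ) * Complex.exp (θ * Complex.I) - x‖))
      volume 0 (2 * π) ∧
    (2 * π)⁻¹ * ∫ θ in (0 : ℝ)..(2 * π),
        Real.log (1 / ‖(r : ℂ) * Complex.exp (θ * Complex.I) - x‖)
      = Real.log (1 / r) := by
  have hpi := pi_pos
  have hr0 : (r:ℂ) ≠ 0 := Complex.ofReal_ne_zero.2 hr.ne'
  have habs : ‖x / r‖ = 1 := by
    rw [norm_div, Complex.norm_of_nonneg hr.le, hx,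
      div_self hr.ne']
  obtain ⟨α, hαmem, hα⟩ := Complex.norm_eq_one_iff'.1 habs
  rw [eq_div_iff hr0] at hα
  have hxr : x = (r:ℂ) * Complex.exp (α * Complex.I) := by rw [← hα]; ring
  have hnorm : ∀ θ : ℝ, ‖(r:ℂ) * Complex.exp (θ*Complex.I) - x‖
      = 2*r*|Real.sin ((θ - α)/2)| := by
    intro θ
    rw [hxr, ← mul_sub, norm_mul, Complex.norm_real, Real.norm_eq_abs,
      _root_.abs_of_pos hr, chord]
    ring
  have hf : ∀ θ : ℝ, Real.log (1 / ‖(r:ℂ) * Complex.exp (θ*Complex.I) - x‖)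
      = -Real.log (2*r*|Real.sin ((θ - α)/2)|) := by
    intro θ; rw [hnorm, one_div, Real.log_inv]
  have hane : ∀ᵐ θ : ℝ, Real.sin ((θ - α)/2) ≠ 0 := by
    rw [ae_iff]
    simp only [not_ne_iff]
    refine measure_mono_null (fun θ hθ => ?_) ((Set.countable_range
      (fun k : ℤ => α + (k:ℝ) * (2*π))).measure_zero volume)
    rcases Real.sin_eq_zero_iff.1 hθ with ⟨k, hk⟩
    exact ⟨k, by push_cast; simp only [Set.mem_setOf_eq] at hθ ⊢; linarith⟩
  have hdecomp : ∀ θ : ℝ, Real.sin ((θ - α)/2) ≠ 0 →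
      -Real.log (2*r*|Real.sin ((θ - α)/2)|)
      = -(Real.log 2 + Real.log r + Real.log |Real.sin ((θ - α)/2)|) := by
    intro θ hθ
    rw [Real.log_mul (by positivity) (abs_ne_zero.2 hθ), Real.log_mul two_ne_zero hr.ne']
  have hK : IntervalIntegrable (fun u => Real.log |Real.sin u|) volume (-α/2) (π - α/2) := by
    refine il_logabssin.mono_set ?_
    obtain ⟨h1, h2⟩ := hαmem
    rw [Set.uIcc_of_le (by linarith : -α/2 ≤ π - α/2),
      Set.uIcc_of_le (by linarith : -π ≤ 2*π)]
    apply Set.Icc_subset_Icc <;> linarith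
  have hK2 : IntervalIntegrable (fun θ : ℝ => Real.log |Real.sin ((θ - α)/2)|)
      volume 0 (2*π) := by
    have h := (hK.comp_mul_right (c := 1/2)).comp_sub_right α
    rw [show -α/2 / (1/2) = -α by ring, show (π - α/2) / (1/2) = 2*π - α by ring,
      show -α + α = (0:ℝ) by ring, show 2*π - α + α = 2*π by ring] at h
    have heq : (fun θ : ℝ => Real.log |Real.sin ((θ - α) * (1/2))|)
        = fun θ : ℝ => Real.log |Real.sin ((θ - α)/2)| := by
      funext θ; rw [show (θ - α) * (1/2) = (θ - α)/2 by ring]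
    rwa [heq] at h
  have hnice : IntervalIntegrable
      (fun θ : ℝ => -(Real.log 2 + Real.log r + Real.log |Real.sin ((θ - α)/2)|))
      volume 0 (2*π) := (intervalIntegrable_const.add hK2).neg
  constructor
  · rw [intervalIntegrable_iff] at hnice ⊢
    refine hnice.congr (ae_restrict_of_ae ?_)
    filter_upwards [hane] with θ hθ
    exact ((hf θ).trans (hdecomp θ hθ)).symm
  · set G : ℝ → ℝ := fun θ => Real.log (2*r*|Real.sin (θ/2)|) with hG
    have hGper : Function.Periodic G (2*π) := by
      intro θ
      simp only [hG]
      rw [show (θ + 2*π)/2 = θ/2 + π by ring, Real.sin_add_pi, abs_neg]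
    have hshift : ∫ θ in (0:ℝ)..(2*π), Real.log (1/‖(r:ℂ)*Complex.exp (θ*Complex.I) - x‖)
        = -∫ θ in (0:ℝ)..(2*π), G θ := by
      have h1 : ∀ θ:ℝ, Real.log (1/‖(r:ℂ)*Complex.exp (θ*Complex.I) - x‖) = -G (θ - α) :=
        fun θ => hf θ
      calc ∫ θ in (0:ℝ)..(2*π), Real.log (1/‖(r:ℂ)*Complex.exp (θ*Complex.I) - x‖)
          = ∫ θ in (0:ℝ)..(2*π), -G (θ - α) := by simp only [h1]
        _ = -∫ θ in (0:ℝ)..(2*π), G (θ - α) := intervalIntegral.integral_neg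
        _ = -∫ θ in (0 - α)..(2*π - α), G θ := by
            rw [intervalIntegral.integral_comp_sub_right]
        _ = -∫ θ in (0:ℝ)..(2*π), G θ := by
            have := hGper.intervalIntegral_add_eq (-α) 0
            rw [zero_add] at this
            rw [zero_sub, show 2*π - α = -α + 2*π by ring, this]
    have hdouble := intervalIntegral.integral_comp_mul_left (a := (0:ℝ)) (b := π) G two_ne_zero
    rw [mul_zero, show (2:ℝ)*π = 2*π from rfl] at hdouble
    have hcong : ∫ u in (0:ℝ)..π, G (2*u)
        = ∫ u in (0:ℝ)..π, (Real.log 2 + Real.log r + Real.log (Real.sin u)) := by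
      apply intervalIntegral.integral_congr_ae
      have hne : ∀ᵐ u : ℝ, u ≠ π := by
        rw [ae_iff]
        simp only [not_ne_iff, Set.setOf_eq_eq_singleton]
        exact measure_singleton _
      filter_upwards [hne] with u hu hmem
      rw [Set.uIoc_of_le hpi.le] at hmem
      have hs : 0 < Real.sin u :=
        Real.sin_pos_of_pos_of_lt_pi hmem.1 (lt_of_le_of_ne hmem.2 hu)
      simp only [hG]
      rw [show (2*u)/2 = u by ring, _root_.abs_of_pos hs,
        Real.log_mul (by positivity) hs.ne', Real.log_mul two_ne_zero hr.ne']
    have hval2 : ∫ u in (0:ℝ)..π, (Real.log 2 + Real.log r + Real.log (Real.sin u))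
        = π * Real.log r := by
      rw [intervalIntegral.integral_add intervalIntegrable_const il_logsin_pi,
        integral_log_sin_pi, intervalIntegral.integral_const]
      simp only [sub_zero, smul_eq_mul]
      ring
    rw [hcong, hval2, smul_eq_mul] at hdouble
    have hGval : ∫ θ in (0:ℝ)..(2*π), G θ = 2*π*Real.log r := by
      have h2 : (2:ℝ)⁻¹ ≠ 0 := by norm_num
      field_simp at hdouble
      rw [mul_comm π 2] at hdouble
      linarith
    rw [hshift, hGval, one_div, Real.log_inv]
    field_simp
end

section
/- Let φ : ℝ² → ℝ be radial and supported in the disc D_R with φ² integrable. Then for every x ∈ D_R with x ≠ 0, ∫_{D_R} ln(1/|Rx/|x| − |x|y/R|) φ(y)² dy = ln(1/R) ∫_{D_R} φ(y)² dy. -/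
open Metric MeasureTheory

section Helpers
open Set Complex Real


lemma slit_aux {w z : ℂ} (hw : ‖w‖ < 1) (hz : ‖z‖ ≤ 1) : (1 - w * z) ∈ Complex.slitPlane := by
  left
  have h1 : (w * z).re ≤ ‖w * z‖ := by
    simpa using Complex.re_le_norm (w * z)
  have h2 : ‖w * z‖ < 1 := by
    rw [norm_mul]
    calc ‖w‖ * ‖z‖ ≤ ‖w‖ * 1 := by
          exact mul_le_mul_of_nonneg_left hz (norm_nonneg w)
    _ < 1 := by simpa using hw
  simp only [Complex.sub_re, Complex.one_re]
  linarith

lemma contA (w : ℂ) (hw : ‖w‖ < 1) :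
    Continuous fun θ : ℝ => Complex.log (1 - w * Complex.exp (θ * Complex.I)) := by
  apply Continuous.clog
  · fun_prop
  · intro θ
    exact slit_aux hw (by simp)

lemma circle_log_int_zero (w : ℂ) (hw : ‖w‖ < 1) :
    ∫ θ in (0:ℝ)..(2 * Real.pi), Real.log ‖1 - w * Complex.exp (θ * Complex.I)‖ = 0 := by
  set f : ℂ → ℂ := fun z => Complex.log (1 - w * z) with hf
  have hdiff : ∀ z : ℂ, ‖z‖ ≤ 1 → DifferentiableAt ℂ f z := by
    intro z hz
    apply DifferentiableAt.clog
    · exact (differentiableAt_const _).sub ((differentiableAt_const w).mul differentiableAt_id)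
    · exact slit_aux hw hz
  have hd : DiffContOnCl ℂ f (ball (0:ℂ) 1) := by
    constructor
    · intro z hz
      exact (hdiff z (mem_closedBall_zero_iff.mp (ball_subset_closedBall hz))).differentiableWithinAt
    · rw [closure_ball (0:ℂ) one_ne_zero]
      intro z hz
      exact (hdiff z (mem_closedBall_zero_iff.mp hz)).continuousAt.continuousWithinAt
  have key := hd.circleIntegral_sub_inv_smul (w := 0) (by simp)
  have hf0 : f 0 = 0 := by simp [hf]
  rw [hf0, smul_zero] at key
  have hrw : (∮ z in C(0, 1), (z - 0)⁻¹ • f z)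
      = ∫ θ in (0:ℝ)..(2 * Real.pi), Complex.I * f (Complex.exp (θ * Complex.I)) := by
    rw [circleIntegral]
    apply intervalIntegral.integral_congr
    intro θ _
    have h0 : circleMap 0 1 θ ≠ 0 := by
      simp [circleMap, Complex.exp_ne_zero]
    simp only [deriv_circleMap, smul_eq_mul, sub_zero]
    rw [show circleMap 0 1 θ = Complex.exp (θ * Complex.I) by simp [circleMap]]
    field_simp [Complex.exp_ne_zero]
  rw [hrw, intervalIntegral.integral_const_mul] at key
  have hz : ∫ θ in (0:ℝ)..(2 * Real.pi), f (Complex.exp (θ * Complex.I)) = 0 := by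
    have h := mul_eq_zero.mp key
    rcases h with h | h
    · exact absurd h Complex.I_ne_zero
    · exact h
  have hcont : Continuous fun θ : ℝ => f (Complex.exp (θ * Complex.I)) := contA w hw
  have hre := Complex.reCLM.intervalIntegral_comp_comm
    (hcont.intervalIntegrable (μ := MeasureTheory.volume) (0:ℝ) (2 * Real.pi))
  have : ∫ θ in (0:ℝ)..(2 * Real.pi), (f (Complex.exp (θ * Complex.I))).re = 0 := by
    simp only [Complex.reCLM_apply] at hre
    rw [hre, hz]; simp
  refine Eq.trans ?_ this
  apply intervalIntegral.integral_congr
  intro θ _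
  simp [hf, Complex.log_re]

lemma cont_log_norm_sub (a b : ℂ) (hb : ‖b‖ < ‖a‖) :
    Continuous fun θ : ℝ => Real.log ‖a - b * Complex.exp (θ * Complex.I)‖ := by
  have ha : a ≠ 0 := by
    intro h
    rw [h, norm_zero] at hb
    exact absurd hb (norm_nonneg b).not_gt
  have hw : ‖b / a‖ < 1 := by
    rw [norm_div]
    exact div_lt_one (lt_of_le_of_lt (norm_nonneg b) hb) |>.mpr hb
  have h1 := (Complex.continuous_re.comp (contA (b / a) hw))
  have h2 : Continuous fun θ : ℝ => Real.log ‖a‖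
      + (Complex.log (1 - b / a * Complex.exp (θ * Complex.I))).re :=
    continuous_const.add h1
  convert h2 using 2 with θ
  have hfac : a - b * Complex.exp (θ * Complex.I)
      = a * (1 - b / a * Complex.exp (θ * Complex.I)) := by
    field_simp
  have hne : (1 - b / a * Complex.exp (θ * Complex.I)) ≠ 0 := by
    intro h
    have : ‖(1:ℂ)‖ ≤ ‖b / a * Complex.exp (θ * Complex.I)‖ := by
      have := sub_eq_zero.mp h
      rw [this]
    simp only [norm_one, norm_mul, Complex.norm_exp_ofReal_mul_I, mul_one] at this
    exact absurd (lt_of_lt_of_le hw this) (lt_irrefl _)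
  rw [hfac, norm_mul, Real.log_mul (norm_ne_zero_iff.mpr ha) (norm_ne_zero_iff.mpr hne)]
  simp [Complex.log_re]

lemma circle_log_int (a b : ℂ) (hb : ‖b‖ < ‖a‖) :
    ∫ θ in (0:ℝ)..(2 * Real.pi), Real.log ‖a - b * Complex.exp (θ * Complex.I)‖
      = 2 * Real.pi * Real.log ‖a‖ := by
  have ha : a ≠ 0 := by
    intro h
    rw [h, norm_zero] at hb
    exact absurd hb (norm_nonneg b).not_gt
  have hw : ‖b / a‖ < 1 := by
    rw [norm_div]
    exact div_lt_one (lt_of_le_of_lt (norm_nonneg b) hb) |>.mpr hb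
  have key := circle_log_int_zero (b / a) hw
  have hcontw : Continuous fun θ : ℝ =>
      Real.log ‖1 - b / a * Complex.exp (θ * Complex.I)‖ := by
    have := Complex.continuous_re.comp (contA (b / a) hw)
    convert this using 2 with θ
    simp [Complex.log_re]
  have heq : ∀ θ : ℝ, Real.log ‖a - b * Complex.exp (θ * Complex.I)‖
      = Real.log ‖a‖ + Real.log ‖1 - b / a * Complex.exp (θ * Complex.I)‖ := by
    intro θ
    have hfac : a - b * Complex.exp (θ * Complex.I)
        = a * (1 - b / a * Complex.exp (θ * Complex.I)) := by field_simp
    have hne : (1 - b / a * Complex.exp (θ * Complex.I)) ≠ 0 := by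
      intro h
      have h1 := sub_eq_zero.mp h
      have : ‖(1:ℂ)‖ = ‖b / a * Complex.exp (θ * Complex.I)‖ := by rw [h1]
      simp only [norm_one, norm_mul, Complex.norm_exp_ofReal_mul_I, mul_one] at this
      rw [← this] at hw
      exact lt_irrefl _ hw
    rw [hfac, norm_mul, Real.log_mul (norm_ne_zero_iff.mpr ha) (norm_ne_zero_iff.mpr hne)]
  rw [intervalIntegral.integral_congr (g := fun θ : ℝ => Real.log ‖a‖
      + Real.log ‖1 - b / a * Complex.exp (θ * Complex.I)‖) (fun θ _ => heq θ)]
  rw [intervalIntegral.integral_add (intervalIntegrable_const)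
    (hcontw.intervalIntegrable (μ := MeasureTheory.volume) _ _), key, add_zero,
    intervalIntegral.integral_const]
  simp [smul_eq_mul]

lemma circle_log_int_Ioo (a b : ℂ) (hb : ‖b‖ < ‖a‖) :
    ∫ θ in Set.Ioo (-Real.pi) Real.pi, Real.log ‖a - b * Complex.exp (θ * Complex.I)‖
      = 2 * Real.pi * Real.log ‖a‖ := by
  have hper : Function.Periodic
      (fun θ : ℝ => Real.log ‖a - b * Complex.exp (θ * Complex.I)‖) (2 * Real.pi) := by
    intro θ
    have : Complex.exp ((↑(θ + 2 * Real.pi)) * Complex.I) = Complex.exp (θ * Complex.I) := by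
      push_cast
      rw [add_mul, Complex.exp_add]
      simp [Complex.exp_two_pi_mul_I]
    simp only [this]
  have h1 : ∫ θ in Set.Ioo (-Real.pi) Real.pi,
      Real.log ‖a - b * Complex.exp (θ * Complex.I)‖
      = ∫ θ in (-Real.pi)..Real.pi, Real.log ‖a - b * Complex.exp (θ * Complex.I)‖ := by
    rw [intervalIntegral.integral_of_le (by linarith [Real.pi_pos]),
      MeasureTheory.integral_Ioc_eq_integral_Ioo]
  have h4 := hper.intervalIntegral_add_eq (-Real.pi) 0
  rw [zero_add, show -Real.pi + 2 * Real.pi = Real.pi by ring] at h4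
  rw [h1, h4]
  exact circle_log_int a b hb

lemma polar_symm_eq (p : ℝ × ℝ) :
    Complex.polarCoord.symm p = (p.1 : ℂ) * Complex.exp (p.2 * Complex.I) := by
  rw [Complex.polarCoord_symm_apply, Complex.exp_mul_I]
  push_cast
  ring

lemma integral_polar (f : ℂ → ℝ) :
    ∫ p in polarCoord.target, p.1 • f ((p.1 : ℂ) * Complex.exp (p.2 * Complex.I))
      = ∫ z, f z := by
  rw [← Complex.integral_comp_polarCoord_symm f]
  simp_rw [polar_symm_eq]

lemma E_symm_polar (p : ℝ × ℝ) :
    Complex.measurableEquivRealProd.symm (polarCoord.symm p)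
      = (p.1 : ℂ) * Complex.exp (p.2 * Complex.I) := by
  rw [← polar_symm_eq]
  rfl

lemma integrableOn_polar (f : ℂ → ℝ) (hf : MeasureTheory.Integrable f) :
    MeasureTheory.IntegrableOn
      (fun p : ℝ × ℝ => p.1 • f ((p.1 : ℂ) * Complex.exp (p.2 * Complex.I)))
      polarCoord.target := by
  set B : ℝ × ℝ → ℝ × ℝ →L[ℝ] ℝ × ℝ := fun p =>
    LinearMap.toContinuousLinearMap (Matrix.toLin (Module.Basis.finTwoProd ℝ) (Module.Basis.finTwoProd ℝ)
      !![Real.cos p.2, -p.1 * Real.sin p.2; Real.sin p.2, p.1 * Real.cos p.2]) with hB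
  have B_det : ∀ p, (B p).det = p.1 := by
    intro p
    conv_rhs => rw [← one_mul p.1, ← Real.cos_sq_add_sin_sq p.2]
    simp only [hB, neg_mul, LinearMap.det_toContinuousLinearMap, LinearMap.det_toLin,
      Matrix.det_fin_two_of, sub_neg_eq_add]
    ring
  have hs : MeasurableSet polarCoord.target := polarCoord.open_target.measurableSet
  have hf' : ∀ p ∈ polarCoord.target,
      HasFDerivWithinAt polarCoord.symm (B p) polarCoord.target p := fun p _ =>
    (hasFDerivAt_polarCoord_symm p).hasFDerivWithinAt
  have hinj : Set.InjOn polarCoord.symm polarCoord.target := by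
    have := polarCoord.symm.injOn
    rwa [OpenPartialHomeomorph.symm_source] at this
  set G : ℝ × ℝ → ℝ := f ∘ Complex.measurableEquivRealProd.symm with hG
  have hGint : MeasureTheory.Integrable G := by
    rw [hG]
    exact ((Complex.volume_preserving_equiv_real_prod.symm).integrable_comp
      hf.aestronglyMeasurable).mpr hf
  have himg : polarCoord.symm '' polarCoord.target = polarCoord.source :=
    polarCoord.symm_image_target_eq_source
  have key := (integrableOn_image_iff_integrableOn_abs_det_fderiv_smul
    MeasureTheory.volume hs hf' hinj G).mp (by rw [himg]; exact hGint.integrableOn)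
  apply key.congr_fun _ hs
  intro p hp
  have hdet : |(B p).det| = p.1 := by
    rw [B_det]
    exact abs_of_pos hp.1
  show |(B p).det| • G (polarCoord.symm p) = p.1 • f ((p.1 : ℂ) * Complex.exp (p.2 * Complex.I))
  rw [hdet, hG]
  simp only [Function.comp_apply, E_symm_polar]

/-- Inner circular average computation. -/
lemma inner_avg (R : ℝ) (hR : 0 < R) (φ : ℂ → ℝ)
    (hrad : ∀ a b : ℂ, ‖a‖ = ‖b‖ → φ a = φ b)
    (hφ0 : ∀ z : ℂ, R ≤ ‖z‖ → φ z = 0)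
    (a : ℂ) (haR : ‖a‖ = R) (c : ℝ) (hc : 0 < c) (hcR : c * R < R)
    (r : ℝ) (hr : 0 < r) :
    ∫ θ in Set.Ioo (-π) π,
        r • (Real.log (1 / ‖a - c • ((r:ℂ) * Complex.exp (θ * Complex.I))‖)
          * φ ((r:ℂ) * Complex.exp (θ * Complex.I)) ^ 2)
      = Real.log (1 / R) * ∫ θ in Set.Ioo (-π) π,
          r • φ ((r:ℂ) * Complex.exp (θ * Complex.I)) ^ 2 := by
  have hnorm : ∀ θ : ℝ, ‖(r:ℂ) * Complex.exp (θ * Complex.I)‖ = r := by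
    intro θ
    rw [norm_mul, Complex.norm_exp_ofReal_mul_I, mul_one, Complex.norm_real,
      Real.norm_eq_abs, abs_of_pos hr]
  have hφr : ∀ θ : ℝ, φ ((r:ℂ) * Complex.exp (θ * Complex.I)) = φ (r:ℂ) := by
    intro θ
    apply hrad
    rw [hnorm, Complex.norm_real, Real.norm_eq_abs, abs_of_pos hr]
  have hsmul : ∀ θ : ℝ, a - c • ((r:ℂ) * Complex.exp (θ * Complex.I))
      = a - ((c * r : ℝ) : ℂ) * Complex.exp (θ * Complex.I) := by
    intro θ
    rw [Complex.real_smul]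
    push_cast
    ring
  rcases lt_or_ge r R with hrR | hrR
  · -- r < R : use the circle average of the log
    have hb : ‖((c * r : ℝ) : ℂ)‖ < ‖a‖ := by
      rw [haR, Complex.norm_real, Real.norm_eq_abs, abs_of_pos (mul_pos hc hr)]
      calc c * r < c * R := by exact mul_lt_mul_of_pos_left hrR hc
        _ < R := hcR
    have hlog := circle_log_int_Ioo a ((c * r : ℝ) : ℂ) hb
    rw [haR] at hlog
    have h1 : ∀ θ : ℝ,
        r • (Real.log (1 / ‖a - c • ((r:ℂ) * Complex.exp (θ * Complex.I))‖)
          * φ ((r:ℂ) * Complex.exp (θ * Complex.I)) ^ 2)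
        = (r * φ (r:ℂ) ^ 2) *
            (- Real.log ‖a - ((c * r : ℝ) : ℂ) * Complex.exp (θ * Complex.I)‖) := by
      intro θ
      rw [hφr, hsmul, one_div, Real.log_inv, smul_eq_mul]
      ring
    simp only [h1]
    rw [MeasureTheory.integral_const_mul, MeasureTheory.integral_neg, hlog]
    have h2 : ∀ θ : ℝ, r • φ ((r:ℂ) * Complex.exp (θ * Complex.I)) ^ 2
        = r * φ (r:ℂ) ^ 2 := by
      intro θ
      rw [hφr, smul_eq_mul]
    simp only [h2]
    rw [MeasureTheory.setIntegral_const, smul_eq_mul, measureReal_def, Real.volume_Ioo]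
    rw [ENNReal.toReal_ofReal (by linarith [Real.pi_pos])]
    rw [one_div, Real.log_inv]
    ring
  · -- R ≤ r : everything vanishes
    have hz : φ (r:ℂ) = 0 := by
      apply hφ0
      rw [Complex.norm_real, Real.norm_eq_abs, abs_of_pos hr]
      linarith
    simp only [hφr, hz]
    simp

end Helpers

open Real

/-- For a radial `φ` supported in the disc `D_R` with `φ²` integrable, the
regular part of the Green potential is constant:
`∫_{D_R} ln(1/|Rx/|x| − |x|y/R|) φ(y)² dy = ln(1/R) ∫_{D_R} φ(y)² dy`. -/
theorem regular_part_radial (R : ℝ) (hR : 0 < R) (φ : ℂ → ℝ)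
    (hrad : ∀ a b : ℂ, ‖a‖ = ‖b‖ → φ a = φ b)
    (hsupp : Function.support φ ⊆ ball (0 : ℂ) R)
    (hint : IntegrableOn (fun y => φ y ^ 2) (ball (0 : ℂ) R))
    (x : ℂ) (hx : x ∈ ball (0 : ℂ) R) (hx0 : x ≠ 0) :
    ∫ y in ball (0 : ℂ) R,
        Real.log (1 / ‖(R / ‖x‖) • x - (‖x‖ / R) • y‖) * φ y ^ 2
      = Real.log (1 / R) * ∫ y in ball (0 : ℂ) R, φ y ^ 2 := by
  have hxR : ‖x‖ < R := mem_ball_zero_iff.mp hx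
  have hxpos : 0 < ‖x‖ := norm_pos_iff.mpr hx0
  set a : ℂ := (R / ‖x‖) • x with ha
  set c : ℝ := ‖x‖ / R with hc
  have haR : ‖a‖ = R := by
    rw [ha, norm_smul, Real.norm_eq_abs, abs_of_pos (div_pos hR hxpos)]
    exact div_mul_cancel₀ R hxpos.ne'
  have hc_pos : 0 < c := div_pos hxpos hR
  have hcR : c * R = ‖x‖ := by rw [hc]; field_simp
  have hφ0 : ∀ z : ℂ, R ≤ ‖z‖ → φ z = 0 := by
    intro z hz
    by_contra h
    have := mem_ball_zero_iff.mp (hsupp (Function.mem_support.mpr h))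
    linarith
  -- the square is globally integrable
  have hsupp2 : Function.support (fun y : ℂ => φ y ^ 2) ⊆ ball (0:ℂ) R := by
    intro y hy
    apply hsupp
    simp only [Function.mem_support] at hy ⊢
    exact fun h => hy (by rw [h]; ring)
  have hint2 : Integrable (fun y : ℂ => φ y ^ 2) :=
    (integrableOn_iff_integrable_of_support_subset hsupp2).mp hint
  have hzero : ∀ y : ℂ, y ∉ ball (0:ℂ) R → φ y ^ 2 = 0 := by
    intro y hy
    by_contra h
    exact hy (hsupp2 h)
  -- notation
  set g : ℂ → ℝ := fun y => Real.log (1 / ‖a - c • y‖) * φ y ^ 2 with hg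
  set H : ℝ × ℝ → ℝ :=
    fun p => p.1 • φ ((p.1:ℂ) * Complex.exp (p.2 * Complex.I)) ^ 2 with hH
  set F : ℝ × ℝ → ℝ :=
    fun p => p.1 • g ((p.1:ℂ) * Complex.exp (p.2 * Complex.I)) with hF
  have hs : MeasurableSet polarCoord.target := polarCoord.open_target.measurableSet
  have hHint : IntegrableOn H polarCoord.target := integrableOn_polar (fun z => φ z ^ 2) hint2
  -- the log factor, truncated
  set M : ℝ × ℝ → ℝ :=
    fun p => Real.log (1 / ‖a - c • ((p.1:ℂ) * Complex.exp (p.2 * Complex.I))‖) with hM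
  set L : ℝ × ℝ → ℝ := Set.indicator {p : ℝ × ℝ | p.1 < R} M with hL
  have hMmeas : Measurable M := by
    apply Real.measurable_log.comp
    apply Measurable.div measurable_const
    apply Continuous.measurable
    fun_prop
  have hLmeas : Measurable L :=
    hMmeas.indicator (measurableSet_lt measurable_fst measurable_const)
  set C : ℝ := |Real.log (R - ‖x‖)| + |Real.log (R + ‖x‖)| with hC
  have hbound : ∀ p ∈ polarCoord.target, ‖L p‖ ≤ C := by
    intro p hp
    rw [polarCoord_target] at hp
    have hp1 : 0 < p.1 := hp.1
    rw [hL, Set.indicator]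
    split_ifs with h
    · -- p.1 < R
      have hnz : ‖(p.1:ℂ) * Complex.exp (p.2 * Complex.I)‖ = p.1 := by
        rw [norm_mul, Complex.norm_exp_ofReal_mul_I, mul_one, Complex.norm_real,
          Real.norm_eq_abs, abs_of_pos hp1]
      have hcs : ‖c • ((p.1:ℂ) * Complex.exp (p.2 * Complex.I))‖ = c * p.1 := by
        rw [norm_smul, Real.norm_eq_abs, abs_of_pos hc_pos, hnz]
      have hlt : c * p.1 < ‖x‖ := by
        rw [← hcR]
        exact mul_lt_mul_of_pos_left h hc_pos
      set t : ℝ := ‖a - c • ((p.1:ℂ) * Complex.exp (p.2 * Complex.I))‖ with ht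
      have htlo : R - ‖x‖ < t := by
        have h1 := norm_sub_norm_le a (c • ((p.1:ℂ) * Complex.exp (p.2 * Complex.I)))
        rw [haR, hcs] at h1
        linarith
      have hthi : t ≤ R + ‖x‖ := by
        have h1 := norm_sub_le a (c • ((p.1:ℂ) * Complex.exp (p.2 * Complex.I)))
        rw [haR, hcs] at h1
        linarith
      have htpos : 0 < t := by linarith
      rw [hM]
      simp only []
      rw [one_div, Real.log_inv, norm_neg, Real.norm_eq_abs, ← ht]
      have hlo : Real.log (R - ‖x‖) ≤ Real.log t :=
        Real.log_le_log (by linarith) htlo.le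
      have hhi : Real.log t ≤ Real.log (R + ‖x‖) :=
        Real.log_le_log htpos hthi
      rw [abs_le]
      constructor
      · have := le_abs_self (Real.log (R + ‖x‖))
        have h2 := neg_abs_le (Real.log (R - ‖x‖))
        have h3 := abs_nonneg (Real.log (R + ‖x‖))
        rw [hC]; linarith
      · have := le_abs_self (Real.log (R + ‖x‖))
        have h3 := abs_nonneg (Real.log (R - ‖x‖))
        rw [hC]; linarith
    · simp only [norm_zero]
      positivity
  have hFint : IntegrableOn F polarCoord.target := by
    have hprod : IntegrableOn (fun p => L p * H p) polarCoord.target := by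
      apply hHint.bdd_mul (c := C) hLmeas.aestronglyMeasurable
      filter_upwards [MeasureTheory.ae_restrict_mem hs] with p hp using hbound p hp
    apply hprod.congr_fun _ hs
    intro p hp
    rw [polarCoord_target] at hp
    have hp1 : 0 < p.1 := hp.1
    show L p * H p = F p
    rcases lt_or_ge p.1 R with h | h
    · rw [hL, Set.indicator_of_mem (show p ∈ {q : ℝ × ℝ | q.1 < R} from h)]
      simp only [hF, hH, hM, hg, smul_eq_mul]
      ring
    · have hz : φ ((p.1:ℂ) * Complex.exp (p.2 * Complex.I)) = 0 := by
        apply hφ0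
        rw [norm_mul, Complex.norm_exp_ofReal_mul_I, mul_one, Complex.norm_real,
          Real.norm_eq_abs, abs_of_pos hp1]
        exact h
      simp [hF, hH, hg, hz]
  -- now the computation
  have step1 : ∫ y in ball (0:ℂ) R, g y = ∫ y, g y := by
    apply setIntegral_eq_integral_of_forall_compl_eq_zero
    intro y hy
    rw [hg]
    simp [hzero y hy]
  have step2 : ∫ y in ball (0:ℂ) R, φ y ^ 2 = ∫ y, φ y ^ 2 := by
    apply setIntegral_eq_integral_of_forall_compl_eq_zero
    intro y hy
    exact hzero y hy
  have hvol : (volume : Measure (ℝ × ℝ)) = (volume : Measure ℝ).prod volume :=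
    MeasureTheory.Measure.volume_eq_prod ℝ ℝ
  have fub1 : ∫ p in polarCoord.target, F p
      = ∫ r in Set.Ioi (0:ℝ), ∫ θ in Set.Ioo (-π) π, F (r, θ) := by
    rw [polarCoord_target] at hFint ⊢
    rw [hvol] at hFint ⊢
    exact MeasureTheory.setIntegral_prod F hFint
  have fub2 : ∫ p in polarCoord.target, H p
      = ∫ r in Set.Ioi (0:ℝ), ∫ θ in Set.Ioo (-π) π, H (r, θ) := by
    rw [polarCoord_target] at hHint ⊢
    rw [hvol] at hHint ⊢
    exact MeasureTheory.setIntegral_prod H hHint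
  have inner : ∀ r ∈ Set.Ioi (0:ℝ),
      ∫ θ in Set.Ioo (-π) π, F (r, θ)
        = Real.log (1 / R) * ∫ θ in Set.Ioo (-π) π, H (r, θ) := by
    intro r hr
    rw [Set.mem_Ioi] at hr
    exact inner_avg R hR φ hrad hφ0 a haR c hc_pos (by rw [hcR]; exact hxR) r hr
  calc ∫ y in ball (0:ℂ) R, g y = ∫ y, g y := step1
    _ = ∫ p in polarCoord.target, F p := (integral_polar g).symm
    _ = ∫ r in Set.Ioi (0:ℝ), ∫ θ in Set.Ioo (-π) π, F (r, θ) := fub1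
    _ = ∫ r in Set.Ioi (0:ℝ),
          Real.log (1 / R) * ∫ θ in Set.Ioo (-π) π, H (r, θ) := by
        apply MeasureTheory.setIntegral_congr_fun measurableSet_Ioi
        intro r hr
        exact inner r hr
    _ = Real.log (1 / R) * ∫ r in Set.Ioi (0:ℝ), ∫ θ in Set.Ioo (-π) π, H (r, θ) :=
        MeasureTheory.integral_const_mul _ _
    _ = Real.log (1 / R) * ∫ p in polarCoord.target, H p := by rw [← fub2]
    _ = Real.log (1 / R) * ∫ y, φ y ^ 2 := by
        rw [integral_polar (fun y => φ y ^ 2)]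
    _ = Real.log (1 / R) * ∫ y in ball (0:ℂ) R, φ y ^ 2 := by rw [← step2]
end

section
/- Let φ : ℝ² → ℝ be radial and supported in the disc D_R with appropriate integrability. Then for every x ∈ D_R with x ≠ 0, ∫_{D_R} G(x,y) φ(y)² dy = ∫_{|y|≤|x|} ln(|y|/|x|) φ(y)² dy + ∫_{D_R} ln(R/|y|) φ(y)² dy, where G(x,y) = ln(1/|x−y|) − ln(1/|Rx/|x| − |x|y/R|). -/
open Metric MeasureTheory Complex
open scoped Real

lemma avg_log_lt (a b : ℂ) (h : ‖b‖ < ‖a‖) :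
    ∫ θ in (0:ℝ)..(2*π), Real.log ‖a - Complex.exp (θ * Complex.I) * b‖
      = 2 * π * Real.log ‖a‖ := by
  have ha0 : (0:ℝ) < ‖a‖ := lt_of_le_of_lt (norm_nonneg b) h
  have ha : a ≠ 0 := norm_pos_iff.mp ha0
  set c : ℂ := b / a with hc
  have hc1 : ‖c‖ < 1 := by rw [hc, norm_div, div_lt_one ha0]; exact h
  have hkey : ∀ z : ℂ, ‖z‖ ≤ 1 → 0 < (1 - c * z).re := by
    intro z hz
    have h1 : ‖c * z‖ < 1 := by
      calc ‖c * z‖ = ‖c‖ * ‖z‖ := norm_mul _ _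
        _ ≤ ‖c‖ * 1 := by nlinarith [norm_nonneg c]
        _ < 1 := by simpa using hc1
    have h2 : (c * z).re < 1 := by
      have := (Complex.abs_re_le_norm (c * z))
      have hb : |(c * z).re| < 1 := lt_of_le_of_lt this h1
      exact lt_of_le_of_lt (le_abs_self _) hb
    have hre : (1 - c * z).re = 1 - (c * z).re := by simp [Complex.sub_re]
    rw [hre]; linarith
  have hne : ∀ z : ℂ, ‖z‖ ≤ 1 → 1 - c * z ≠ 0 := by
    intro z hz h0
    have := hkey z hz
    rw [h0] at this; simp at this
  set F : ℂ → ℂ := fun z => Complex.log (1 - c * z) with hF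
  have hdiff : DifferentiableOn ℂ F (closedBall 0 1) := by
    intro z hz
    have hz1 : ‖z‖ ≤ 1 := by simpa [mem_closedBall, dist_zero_right] using hz
    have hd : DifferentiableAt ℂ (fun z : ℂ => 1 - c * z) z :=
      (differentiable_const (1:ℂ)).differentiableAt.sub
        (((differentiable_const c).mul differentiable_id).differentiableAt)
    exact (hd.clog (Complex.mem_slitPlane_iff.mpr (Or.inl (hkey z hz1)))).differentiableWithinAt
  have hcauchy := hdiff.circleIntegral_sub_inv_smul (mem_ball_self one_pos)
  have hF0 : F 0 = 0 := by simp [hF]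
  rw [hF0, smul_zero] at hcauchy
  have hunfold : (∮ z in C(0, 1), (z - 0)⁻¹ • F z)
      = ∫ θ in (0:ℝ)..(2*π), Complex.I * F (Complex.exp (θ * Complex.I)) := by
    rw [circleIntegral]
    apply intervalIntegral.integral_congr
    intro θ _
    have hcm : circleMap 0 1 θ = Complex.exp (θ * Complex.I) := by simp [circleMap]
    simp only [deriv_circleMap, hcm, sub_zero, smul_eq_mul]
    have hz : Complex.exp (θ * Complex.I) ≠ 0 := Complex.exp_ne_zero _
    field_simp
  rw [hunfold] at hcauchy
  have hcont : Continuous fun θ : ℝ => F (Complex.exp (θ * Complex.I)) := by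
    rw [continuous_iff_continuousAt]
    intro θ
    have hg : Continuous fun θ : ℝ => Complex.exp ((θ:ℂ) * Complex.I) :=
      (Complex.continuous_ofReal.mul continuous_const).cexp
    have hnorm : ‖Complex.exp ((θ:ℂ) * Complex.I)‖ ≤ 1 := by
      rw [Complex.norm_exp_ofReal_mul_I]
    have h1 : ContinuousAt (fun z : ℂ => 1 - c * z) (Complex.exp ((θ:ℂ) * Complex.I)) :=
      (continuous_const.sub (continuous_const.mul continuous_id)).continuousAt
    have hgc : ContinuousAt (fun θ : ℝ => 1 - c * Complex.exp ((θ:ℂ) * Complex.I)) θ :=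
      (continuous_const.sub (continuous_const.mul hg)).continuousAt
    exact ContinuousAt.clog hgc (Complex.mem_slitPlane_iff.mpr (Or.inl (hkey _ hnorm)))
  have hint : IntervalIntegrable (fun θ : ℝ => F (Complex.exp (θ * Complex.I)))
      MeasureTheory.volume 0 (2*π) := hcont.intervalIntegrable _ _
  have hzero : (∫ θ in (0:ℝ)..(2*π), F (Complex.exp (θ * Complex.I))) = 0 := by
    rw [intervalIntegral.integral_const_mul] at hcauchy
    exact (mul_eq_zero.mp hcauchy).resolve_left Complex.I_ne_zero
  have hre0 : (∫ θ in (0:ℝ)..(2*π), Real.log ‖1 - c * Complex.exp (θ * Complex.I)‖) = 0 := by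
    have : (fun θ : ℝ => Real.log ‖1 - c * Complex.exp (θ * Complex.I)‖)
        = fun θ : ℝ => (F (Complex.exp (θ * Complex.I))).re := by
      funext θ
      rw [hF, Complex.log_re]
    have h3 := Complex.reCLM.intervalIntegral_comp_comm hint
    simp only [Complex.reCLM_apply] at h3
    rw [this, h3, hzero, Complex.zero_re]
  have hsplit : ∀ θ : ℝ, Real.log ‖a - Complex.exp (θ * Complex.I) * b‖
      = Real.log ‖a‖ + Real.log ‖1 - c * Complex.exp (θ * Complex.I)‖ := by
    intro θ
    have hfac : a - Complex.exp (θ * Complex.I) * b = a * (1 - c * Complex.exp (θ * Complex.I)) := by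
      rw [hc]; field_simp
    have hnorm : ‖Complex.exp ((θ:ℂ) * Complex.I)‖ ≤ 1 := by
      rw [Complex.norm_exp_ofReal_mul_I]
    rw [hfac, norm_mul, Real.log_mul ha0.ne' (norm_ne_zero_iff.mpr (hne _ hnorm))]
  calc ∫ θ in (0:ℝ)..(2*π), Real.log ‖a - Complex.exp (θ * Complex.I) * b‖
      = ∫ θ in (0:ℝ)..(2*π),
          (Real.log ‖a‖ + Real.log ‖1 - c * Complex.exp (θ * Complex.I)‖) := by
        apply intervalIntegral.integral_congr; intro θ _; exact hsplit θ
    _ = (∫ θ in (0:ℝ)..(2*π), Real.log ‖a‖)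
        + ∫ θ in (0:ℝ)..(2*π), Real.log ‖1 - c * Complex.exp (θ * Complex.I)‖ := by
        apply intervalIntegral.integral_add (intervalIntegrable_const)
        have : Continuous fun θ : ℝ => Real.log ‖1 - c * Complex.exp (θ * Complex.I)‖ := by
          rw [continuous_iff_continuousAt]; intro θ
          have hnorm : ‖Complex.exp ((θ:ℂ) * Complex.I)‖ ≤ 1 := by
            rw [Complex.norm_exp_ofReal_mul_I]
          have hb : Continuous fun θ : ℝ => ‖1 - c * Complex.exp ((θ:ℂ) * Complex.I)‖ :=
            (continuous_const.sub (continuous_const.mul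
              ((Complex.continuous_ofReal.mul continuous_const).cexp))).norm
          exact ContinuousAt.log hb.continuousAt (norm_ne_zero_iff.mpr (hne _ hnorm))
        exact this.intervalIntegrable _ _
    _ = 2 * π * Real.log ‖a‖ := by
        rw [hre0, intervalIntegral.integral_const, add_zero, sub_zero, smul_eq_mul]

lemma avg_log_max (a b : ℂ) (h : ‖a‖ ≠ ‖b‖) :
    ∫ θ in (0:ℝ)..(2*π), Real.log ‖a - Complex.exp (θ * Complex.I) * b‖
      = 2 * π * Real.log (max ‖a‖ ‖b‖) := by
  rcases lt_or_gt_of_ne h with hlt | hgt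
  · -- ‖a‖ < ‖b‖ : flip roles
    set g : ℝ → ℝ := fun θ => Real.log ‖b - Complex.exp (θ * Complex.I) * a‖ with hg
    have hper : Function.Periodic g (2*π) := by
      intro θ
      have : Complex.exp ((↑(θ + 2*π)) * Complex.I) = Complex.exp ((θ:ℂ) * Complex.I) := by
        push_cast
        rw [add_mul, Complex.exp_add, Complex.exp_two_pi_mul_I, mul_one]
      simp only [hg, this]
    have hstep : ∀ θ : ℝ, Real.log ‖a - Complex.exp ((θ:ℂ) * Complex.I) * b‖ = g (-θ) := by
      intro θ
      have hfac : a - Complex.exp ((θ:ℂ) * Complex.I) * b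
          = -(Complex.exp ((θ:ℂ) * Complex.I)) * (b - Complex.exp ((↑(-θ):ℂ) * Complex.I) * a) := by
        have : Complex.exp ((θ:ℂ) * Complex.I) * Complex.exp ((↑(-θ):ℂ) * Complex.I) = 1 := by
          rw [← Complex.exp_add]; push_cast; ring_nf; exact Complex.exp_zero
        push_cast at this ⊢
        ring_nf
        ring_nf at this
        rw [mul_comm] at this
        calc a - Complex.exp ((θ:ℂ) * Complex.I) * b
            = (Complex.exp (-((θ:ℂ) * Complex.I)) * Complex.exp ((θ:ℂ) * Complex.I)) * a
              - Complex.exp ((θ:ℂ) * Complex.I) * b := by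
                rw [← Complex.exp_add]; ring_nf; rw [Complex.exp_zero]; ring
          _ = _ := by ring_nf
      have hnorm1 : ‖-(Complex.exp ((θ:ℂ) * Complex.I))‖ = 1 := by
        rw [norm_neg, Complex.norm_exp_ofReal_mul_I]
      rw [hfac, norm_mul, hnorm1, one_mul]
    calc ∫ θ in (0:ℝ)..(2*π), Real.log ‖a - Complex.exp (θ * Complex.I) * b‖
        = ∫ θ in (0:ℝ)..(2*π), g (-θ) := by
          apply intervalIntegral.integral_congr; intro θ _; exact hstep θ
      _ = ∫ θ in (-(2*π))..(-(0:ℝ)), g θ := intervalIntegral.integral_comp_neg g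
      _ = ∫ θ in (-(2*π))..(-(2*π)+2*π), g θ := by norm_num
      _ = ∫ θ in (0:ℝ)..(0+2*π), g θ := hper.intervalIntegral_add_eq (-(2*π)) 0
      _ = ∫ θ in (0:ℝ)..(2*π), g θ := by norm_num
      _ = 2 * π * Real.log ‖b‖ := avg_log_lt b a hlt
      _ = 2 * π * Real.log (max ‖a‖ ‖b‖) := by rw [max_eq_right hlt.le]
  · rw [avg_log_lt a b hgt, max_eq_left hgt.le]

section Rotation

lemma rot_coe (α : ℝ) (y : ℂ) :
    (rotation (Circle.exp α)) y = Complex.exp (α * Complex.I) * y := by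
  rw [rotation_apply, Circle.coe_exp]

lemma rot_norm (α : ℝ) : ‖Complex.exp ((α:ℂ) * Complex.I)‖ = 1 := by
  rw [Complex.norm_exp_ofReal_mul_I]

lemma rot_preimage (α : ℝ) (R : ℝ) :
    (rotation (Circle.exp α)) ⁻¹' (ball (0:ℂ) R) = ball (0:ℂ) R := by
  ext y
  simp only [Set.mem_preimage, mem_ball, dist_zero_right, rot_coe, norm_mul, rot_norm, one_mul]

lemma rot_setIntegral (α : ℝ) (g : ℂ → ℝ) (R : ℝ) :
    ∫ y in ball (0:ℂ) R, g (Complex.exp (α * Complex.I) * y)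
      = ∫ y in ball (0:ℂ) R, g y := by
  have hmp : MeasurePreserving (rotation (Circle.exp α)) volume volume :=
    (rotation (Circle.exp α)).measurePreserving
  have hemb : MeasurableEmbedding (rotation (Circle.exp α)) :=
    (rotation (Circle.exp α)).toHomeomorph.measurableEmbedding
  have h := hmp.setIntegral_preimage_emb hemb g (ball (0:ℂ) R)
  rw [rot_preimage] at h
  rw [← h]
  apply setIntegral_congr_fun measurableSet_ball
  intro y _
  simp only [rot_coe]

lemma rot_integrableOn {α : ℝ} {g : ℂ → ℝ} {R : ℝ}
    (hg : IntegrableOn g (ball (0:ℂ) R)) :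
    IntegrableOn (fun y => g (Complex.exp (α * Complex.I) * y)) (ball (0:ℂ) R) := by
  have hmp : MeasurePreserving (rotation (Circle.exp α)) volume volume :=
    (rotation (Circle.exp α)).measurePreserving
  have hemb : MeasurableEmbedding (rotation (Circle.exp α)) :=
    (rotation (Circle.exp α)).toHomeomorph.measurableEmbedding
  have hres := hmp.restrict_preimage (measurableSet_ball (x := (0:ℂ)) (ε := R))
  rw [rot_preimage] at hres
  have h2 := (hres.integrable_comp_emb hemb).mpr hg
  have : (g ∘ (rotation (Circle.exp α))) = fun y => g (Complex.exp (α * Complex.I) * y) := by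
    funext y; simp [Function.comp, rot_coe]
  rwa [this] at h2

end Rotation


noncomputable def greenKernel (R : ℝ) (x y : ℂ) : ℝ :=
  Real.log (1 / ‖x - y‖) - Real.log (1 / ‖(R / ‖x‖) • x - (‖x‖ / R) • y‖)

lemma greenKernel_eq (R : ℝ) (x y : ℂ) :
    greenKernel R x y
      = Real.log ‖(R / ‖x‖) • x - (‖x‖ / R) • y‖ - Real.log ‖x - y‖ := by
  unfold greenKernel
  rw [one_div, one_div, Real.log_inv, Real.log_inv]
  ring

/-- Explicit formula for the Green potential of a radial density: for radial
`φ` supported in `D_R` and `x ∈ D_R`, `x ≠ 0`,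
`∫_{D_R} G(x,y) φ(y)² dy = ∫_{|y|≤|x|} ln(|y|/|x|) φ(y)² dy + ∫_{D_R} ln(R/|y|) φ(y)² dy`. -/
theorem green_potential_radial (R : ℝ) (hR : 0 < R) (φ : ℂ → ℝ)
    (hrad : ∀ a b : ℂ, ‖a‖ = ‖b‖ → φ a = φ b)
    (hsupp : Function.support φ ⊆ ball (0 : ℂ) R)
    (hint1 : ∀ x ∈ ball (0 : ℂ) R,
      IntegrableOn (fun y => Real.log (1 / ‖x - y‖) * φ y ^ 2) (ball (0 : ℂ) R))
    (hint2 : IntegrableOn (fun y => φ y ^ 2) (ball (0 : ℂ) R))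
    (x : ℂ) (hx : x ∈ ball (0 : ℂ) R) (hx0 : x ≠ 0) :
    ∫ y in ball (0 : ℂ) R, greenKernel R x y * φ y ^ 2
      = (∫ y in closedBall (0 : ℂ) ‖x‖, Real.log (‖y‖ / ‖x‖) * φ y ^ 2)
        + ∫ y in ball (0 : ℂ) R, Real.log (R / ‖y‖) * φ y ^ 2 := by
  have hr0 : 0 < ‖x‖ := norm_pos_iff.mpr hx0
  have hrR : ‖x‖ < R := mem_ball_zero_iff.mp hx
  set r : ℝ := ‖x‖ with hrdef
  set f : ℂ → ℝ := fun y => φ y ^ 2 with hfdef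
  set K : ℂ → ℝ := fun y => greenKernel R x y * f y with hKdef
  -- basic integrability facts
  have hlogf : IntegrableOn (fun y => Real.log ‖y‖ * f y) (ball (0:ℂ) R) := by
    have h0 := hint1 0 (mem_ball_self hR)
    have heq : (fun y => Real.log ‖y‖ * f y)
        = fun y : ℂ => -(Real.log (1 / ‖(0:ℂ) - y‖) * φ y ^ 2) := by
      funext y; rw [zero_sub, norm_neg, one_div, Real.log_inv]; ring
    rw [heq]
    exact h0.neg
  have hlogxf : IntegrableOn (fun y => Real.log ‖x - y‖ * f y) (ball (0:ℂ) R) := by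
    have h0 := hint1 x hx
    have heq : (fun y => Real.log ‖x - y‖ * f y)
        = fun y : ℂ => -(Real.log (1 / ‖x - y‖) * φ y ^ 2) := by
      funext y; rw [one_div, Real.log_inv]; ring
    rw [heq]
    exact h0.neg
  -- the outer factor
  have hAnorm : ‖(R / r) • x‖ = R := by
    rw [norm_smul, Real.norm_eq_abs, abs_of_pos (by positivity), ← hrdef]
    field_simp
  have hBnorm : ∀ y : ℂ, ‖(r / R) • y‖ = (r / R) * ‖y‖ := by
    intro y
    rw [norm_smul, Real.norm_eq_abs, abs_of_pos (by positivity)]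
  have hBlt : ∀ y ∈ ball (0:ℂ) R, ‖(r / R) • y‖ < r := by
    intro y hy
    rw [hBnorm]
    have : ‖y‖ < R := mem_ball_zero_iff.mp hy
    calc (r / R) * ‖y‖ < (r / R) * R := by
          apply mul_lt_mul_of_pos_left this (by positivity)
      _ = r := by field_simp
  -- integrability of the regular part
  have hL1f : IntegrableOn
      (fun y => Real.log ‖(R / r) • x - (r / R) • y‖ * f y) (ball (0:ℂ) R) := by
    apply Integrable.bdd_mul (c := max |Real.log (R - r)| |Real.log (R + r)|) hint2
    · exact (Real.measurable_log.comp
        (continuous_norm.comp (continuous_const.sub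
          (continuous_id.const_smul (r / R)))).measurable).aestronglyMeasurable
    · rw [ae_restrict_iff' measurableSet_ball]
      apply Filter.Eventually.of_forall
      intro y hy
      have h1 : R - r ≤ ‖(R / r) • x - (r / R) • y‖ := by
        have := norm_sub_norm_le ((R / r) • x) ((r / R) • y)
        have h2 := (hBlt y hy).le
        rw [hAnorm] at this
        linarith
      have h2 : ‖(R / r) • x - (r / R) • y‖ ≤ R + r := by
        have := norm_sub_le ((R / r) • x) ((r / R) • y)
        have h3 := (hBlt y hy).le
        rw [hAnorm] at this
        linarith
      rw [Real.norm_eq_abs]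
      apply abs_le_max_abs_abs
      · exact Real.log_le_log (by linarith) h1
      · exact Real.log_le_log (by linarith) h2
  have hKint : IntegrableOn K (ball (0:ℂ) R) := by
    have : K = fun y => Real.log ‖(R / r) • x - (r / R) • y‖ * f y
        - Real.log ‖x - y‖ * f y := by
      funext y; rw [hKdef]; simp only [greenKernel_eq, ← hrdef]; ring
    rw [this]
    exact hL1f.sub hlogxf
  -- rotation invariance of K
  have hKrot : ∀ (α : ℝ) (y : ℂ),
      K (Complex.exp (α * Complex.I) * y) = greenKernel R x (Complex.exp (α * Complex.I) * y) * f y := by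
    intro α y
    have hn : ‖Complex.exp ((α:ℂ) * Complex.I) * y‖ = ‖y‖ := by
      rw [norm_mul, rot_norm, one_mul]
    rw [hKdef]
    simp only [hfdef]
    rw [hrad _ _ hn]
  -- per-α transfer
  have hKa_eq : ∀ α : ℝ, (fun y => greenKernel R x (Complex.exp (α * Complex.I) * y) * f y)
      = fun y => K (Complex.exp (α * Complex.I) * y) := by
    intro α; funext y; rw [hKrot]
  have hKaint : ∀ α : ℝ, IntegrableOn
      (fun y => greenKernel R x (Complex.exp (α * Complex.I) * y) * f y) (ball (0:ℂ) R) := by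
    intro α; rw [hKa_eq]; exact rot_integrableOn hKint
  have hKaval : ∀ α : ℝ,
      (∫ y in ball (0:ℂ) R, greenKernel R x (Complex.exp (α * Complex.I) * y) * f y)
      = ∫ y in ball (0:ℂ) R, K y := by
    intro α; rw [hKa_eq]; exact rot_setIntegral α K R
  have hKanorm : ∀ α : ℝ,
      (∫ y in ball (0:ℂ) R, ‖greenKernel R x (Complex.exp (α * Complex.I) * y) * f y‖)
      = ∫ y in ball (0:ℂ) R, ‖K y‖ := by
    intro α
    have heq : (fun y => ‖greenKernel R x (Complex.exp (α * Complex.I) * y) * f y‖)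
        = fun y => ‖K (Complex.exp (α * Complex.I) * y)‖ := by
      funext y; rw [hKrot]
    rw [heq]
    exact rot_setIntegral α (fun y => ‖K y‖) R
  -- joint measurability
  have hGmeas : Measurable (greenKernel R x) := by
    unfold greenKernel
    exact (Real.measurable_log.comp
        (measurable_const.div (continuous_const.sub continuous_id).norm.measurable)).sub
      (Real.measurable_log.comp (measurable_const.div
        ((continuous_const.sub (continuous_id.const_smul (‖x‖ / R))).norm).measurable))
  have hc : Continuous fun p : ℝ × ℂ => Complex.exp ((p.1:ℂ) * Complex.I) * p.2 :=
    (((Complex.continuous_ofReal.comp continuous_fst).mul continuous_const).cexp).mul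
      continuous_snd
  have hPmeas : AEStronglyMeasurable
      (fun p : ℝ × ℂ => greenKernel R x (Complex.exp (p.1 * Complex.I) * p.2) * f p.2)
      ((volume.restrict (Set.Ioc (0:ℝ) (2*π))).prod (volume.restrict (ball (0:ℂ) R))) := by
    apply AEStronglyMeasurable.mul
    · exact (hGmeas.comp hc.measurable).aestronglyMeasurable
    · exact (hint2.aestronglyMeasurable).comp_snd
  have hPint : Integrable
      (fun p : ℝ × ℂ => greenKernel R x (Complex.exp (p.1 * Complex.I) * p.2) * f p.2)
      ((volume.restrict (Set.Ioc (0:ℝ) (2*π))).prod (volume.restrict (ball (0:ℂ) R))) := by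
    rw [integrable_prod_iff hPmeas]
    constructor
    · exact Filter.Eventually.of_forall fun α => hKaint α
    · have hconst : (fun α : ℝ => ∫ y in ball (0:ℂ) R,
          ‖greenKernel R x (Complex.exp (α * Complex.I) * y) * f y‖)
          = fun _ : ℝ => ∫ y in ball (0:ℂ) R, ‖K y‖ := funext fun α => hKanorm α
      rw [hconst]
      exact (integrableOn_const_iff).mpr (Or.inr (by rw [Real.volume_Ioc]; exact ENNReal.ofReal_lt_top))
  have hswap := integral_integral_swap
    (f := fun (α : ℝ) (y : ℂ) => greenKernel R x (Complex.exp (α * Complex.I) * y) * f y) hPint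
  -- the constant outer integral
  have e1 : (∫ α in Set.Ioc (0:ℝ) (2*π), ∫ y in ball (0:ℂ) R,
        greenKernel R x (Complex.exp (α * Complex.I) * y) * f y)
      = (2*π) * ∫ y in ball (0:ℂ) R, K y := by
    rw [show (fun α : ℝ => ∫ y in ball (0:ℂ) R,
        greenKernel R x (Complex.exp (α * Complex.I) * y) * f y)
        = fun _ : ℝ => ∫ y in ball (0:ℂ) R, K y from funext fun α => hKaval α]
    rw [setIntegral_const, Real.volume_real_Ioc_of_le (by positivity), sub_zero,
      smul_eq_mul]
  -- the inner angular integral, pointwise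
  have hsph : (volume : Measure ℂ) (sphere (0:ℂ) r) = 0 := Measure.addHaar_sphere volume 0 r
  have hae : ∀ᵐ y : ℂ ∂(volume.restrict (ball (0:ℂ) R)), ‖y‖ ≠ r := by
    apply ae_restrict_of_ae
    rw [ae_iff]
    have hset : {y : ℂ | ¬ ‖y‖ ≠ r} = sphere (0:ℂ) r := by
      ext y; simp [mem_sphere_zero_iff_norm]
    rw [hset]; exact hsph
  have e3 : (∫ y in ball (0:ℂ) R, ∫ α in Set.Ioc (0:ℝ) (2*π),
        greenKernel R x (Complex.exp (α * Complex.I) * y) * f y)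
      = ∫ y in ball (0:ℂ) R, (2*π) * ((Real.log R - Real.log (max r ‖y‖)) * f y) := by
    apply integral_congr_ae
    filter_upwards [hae, ae_restrict_mem measurableSet_ball] with y hy hyball
    have hyR : ‖y‖ < R := mem_ball_zero_iff.mp hyball
    have hpull : (∫ α in Set.Ioc (0:ℝ) (2*π),
        greenKernel R x (Complex.exp (α * Complex.I) * y) * f y)
        = (∫ α in Set.Ioc (0:ℝ) (2*π),
            greenKernel R x (Complex.exp (α * Complex.I) * y)) * f y :=
      integral_mul_const _ _
    rw [hpull]
    have hBylt : ‖(r / R) • y‖ < r := hBlt y hyball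
    have hsm : ∀ z : ℂ, (r / R) • (z * y) = z * ((r / R) • y) := fun z => by
      rw [Complex.real_smul, Complex.real_smul]; ring
    have hGexp : ∀ α : ℝ, greenKernel R x (Complex.exp (α * Complex.I) * y)
        = Real.log ‖(R / r) • x - Complex.exp (α * Complex.I) * ((r / R) • y)‖
          - Real.log ‖x - Complex.exp (α * Complex.I) * y‖ := by
      intro α; rw [greenKernel_eq, ← hrdef, hsm]
    have hIoc : (∫ α in Set.Ioc (0:ℝ) (2*π),
        greenKernel R x (Complex.exp (α * Complex.I) * y))
        = ∫ α in (0:ℝ)..(2*π), greenKernel R x (Complex.exp (α * Complex.I) * y) :=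
      (intervalIntegral.integral_of_le (by positivity)).symm
    rw [hIoc]
    have hcont1 : Continuous fun α : ℝ =>
        Real.log ‖(R / r) • x - Complex.exp ((α:ℂ) * Complex.I) * ((r / R) • y)‖ := by
      apply Continuous.log
      · exact (continuous_const.sub
          (((Complex.continuous_ofReal.mul continuous_const).cexp).mul continuous_const)).norm
      · intro α
        rw [norm_ne_zero_iff]
        intro h0
        have h1 : ‖(R / r) • x‖ = ‖Complex.exp ((α:ℂ) * Complex.I) * ((r / R) • y)‖ := by
          rw [sub_eq_zero] at h0; rw [h0]
        rw [hAnorm, norm_mul, rot_norm, one_mul] at h1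
        have := hBylt
        rw [← h1] at this
        linarith
    have hcont2 : Continuous fun α : ℝ =>
        Real.log ‖x - Complex.exp ((α:ℂ) * Complex.I) * y‖ := by
      apply Continuous.log
      · exact (continuous_const.sub
          (((Complex.continuous_ofReal.mul continuous_const).cexp).mul continuous_const)).norm
      · intro α
        rw [norm_ne_zero_iff]
        intro h0
        apply hy
        rw [sub_eq_zero] at h0
        have h1 : ‖x‖ = ‖Complex.exp ((α:ℂ) * Complex.I) * y‖ := by rw [← h0]
        rw [norm_mul, rot_norm, one_mul] at h1
        rw [← h1, ← hrdef]
    have hsplit : (∫ α in (0:ℝ)..(2*π), greenKernel R x (Complex.exp (α * Complex.I) * y))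
        = (∫ α in (0:ℝ)..(2*π),
            Real.log ‖(R / r) • x - Complex.exp (α * Complex.I) * ((r / R) • y)‖)
          - ∫ α in (0:ℝ)..(2*π), Real.log ‖x - Complex.exp (α * Complex.I) * y‖ := by
      rw [← intervalIntegral.integral_sub (hcont1.intervalIntegrable _ _)
        (hcont2.intervalIntegrable _ _)]
      apply intervalIntegral.integral_congr
      intro α _
      exact hGexp α
    rw [hsplit]
    have hAB : ‖(R / r) • x‖ ≠ ‖(r / R) • y‖ := by
      rw [hAnorm]; intro h; rw [← h] at hBylt; linarith
    have hv1 := avg_log_max ((R / r) • x) ((r / R) • y) hAB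
    rw [hAnorm] at hv1
    have hmax1 : max R ‖(r / R) • y‖ = R := max_eq_left (by linarith [hBylt])
    rw [hmax1] at hv1
    have hxy : ‖x‖ ≠ ‖y‖ := by rw [← hrdef]; exact Ne.symm hy
    have hv2 := avg_log_max x y hxy
    rw [← hrdef] at hv2
    rw [hv1, hv2]
    ring
  -- pull out 2π
  have e4 : (∫ y in ball (0:ℂ) R, (2*π) * ((Real.log R - Real.log (max r ‖y‖)) * f y))
      = (2*π) * ∫ y in ball (0:ℂ) R, (Real.log R - Real.log (max r ‖y‖)) * f y :=
    integral_const_mul _ _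
  -- identify with the two RHS integrals
  have hae0 : ∀ᵐ y : ℂ ∂(volume.restrict (ball (0:ℂ) R)), y ≠ (0:ℂ) := by
    apply ae_restrict_of_ae
    rw [ae_iff]
    have hset : {y : ℂ | ¬ y ≠ 0} = {(0:ℂ)} := by ext y; simp
    rw [hset]; exact measure_singleton 0
  have hw_int : IntegrableOn (fun y => Real.log (‖y‖ / r) * f y) (ball (0:ℂ) R) := by
    apply Integrable.congr (hlogf.sub (hint2.mul_const (Real.log r)))
    filter_upwards [hae0] with y hy0
    rw [Real.log_div (norm_ne_zero_iff.mpr hy0) hr0.ne']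
    simp only [Pi.sub_apply, hfdef]
    ring
  have hv_int : IntegrableOn (fun y => Real.log (R / ‖y‖) * f y) (ball (0:ℂ) R) := by
    apply Integrable.congr ((hint2.const_mul (Real.log R)).sub hlogf)
    filter_upwards [hae0] with y hy0
    rw [Real.log_div hR.ne' (norm_ne_zero_iff.mpr hy0)]
    simp only [Pi.sub_apply, hfdef]
    ring
  have hu_int : IntegrableOn
      ((closedBall (0:ℂ) r).indicator (fun y => Real.log (‖y‖ / r) * f y)) (ball (0:ℂ) R) :=
    hw_int.indicator measurableSet_closedBall
  have e5 : (∫ y in ball (0:ℂ) R, (Real.log R - Real.log (max r ‖y‖)) * f y)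
      = (∫ y in closedBall (0:ℂ) r, Real.log (‖y‖ / r) * f y)
        + ∫ y in ball (0:ℂ) R, Real.log (R / ‖y‖) * f y := by
    have hptwise : ∀ᵐ y : ℂ ∂(volume.restrict (ball (0:ℂ) R)),
        (Real.log R - Real.log (max r ‖y‖)) * f y
          = (closedBall (0:ℂ) r).indicator (fun y => Real.log (‖y‖ / r) * f y) y
            + Real.log (R / ‖y‖) * f y := by
      filter_upwards [hae0] with y hy0
      have hy0' : ‖y‖ ≠ 0 := norm_ne_zero_iff.mpr hy0
      by_cases hle : ‖y‖ ≤ r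
      · rw [Set.indicator_of_mem (mem_closedBall_zero_iff.mpr hle), max_eq_left hle,
          Real.log_div hy0' hr0.ne', Real.log_div hR.ne' hy0']
        ring
      · push_neg at hle
        rw [Set.indicator_of_notMem (by rw [mem_closedBall_zero_iff]; exact not_le.mpr hle),
          max_eq_right hle.le, Real.log_div hR.ne' hy0']
        ring
    rw [integral_congr_ae hptwise, integral_add hu_int hv_int]
    congr 1
    rw [setIntegral_indicator measurableSet_closedBall,
      Set.inter_eq_self_of_subset_right (closedBall_subset_ball hrR)]
  -- assemble
  have two_pi_ne : (2*π : ℝ) ≠ 0 := by positivity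
  have hfinal : (∫ y in ball (0:ℂ) R, K y)
      = ∫ y in ball (0:ℂ) R, (Real.log R - Real.log (max r ‖y‖)) * f y := by
    apply mul_left_cancel₀ two_pi_ne
    rw [← e1, hswap, e3, e4]
  show (∫ y in ball (0:ℂ) R, greenKernel R x y * f y)
      = (∫ y in closedBall (0:ℂ) r, Real.log (‖y‖ / r) * f y)
        + ∫ y in ball (0:ℂ) R, Real.log (R / ‖y‖) * f y
  rw [← e5]
  exact hfinal
end

section
/- Suppose λ₁ > λ₂ > 0, R > 0, φ₂ ∈ H¹₀(D_R) is radial, and set λ̃ = λ₁/λ₂ > 1, φ̃₂(x) = λ̃ φ₂(√λ̃ x) extended by zero outside D_{R/√λ̃}. If φ₂ ≢ 0, then ∫∫_{D_R×D_R} G(x,y) φ̃₂(x)² φ̃₂(y)² dx dy > ∫∫_{D_R×D_R} G(x,y) φ₂(x)² φ₂(y)² dx dy, where G(x,y) = ln(1/|x−y|) − ln(1/|Rx/|x| − |x|y/R|). -/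
open Metric MeasureTheory

section Aux

lemma gkAux_nsq (z : ℂ) : ‖z‖^2 = z.re^2 + z.im^2 := by
  rw [Complex.sq_norm, Complex.normSq_apply]; ring

lemma gkAux_smul_re (r : ℝ) (z : ℂ) : (r • z).re = r * z.re := by simp [Complex.real_smul]
lemma gkAux_smul_im (r : ℝ) (z : ℂ) : (r • z).im = r * z.im := by simp [Complex.real_smul]

lemma gkAux_Nsq {t : ℝ} (ht : 0 < t) {u : ℂ} (hu : u ≠ 0) (v : ℂ) :
    ‖(t/‖u‖) • u - (‖u‖/t) • v‖^2
      = t^2 - 2*(u.re*v.re + u.im*v.im) + ‖u‖^2*‖v‖^2/t^2 := by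
  have hn : 0 < ‖u‖ := norm_pos_iff.mpr hu
  have hnu : ‖u‖^2 = u.re^2 + u.im^2 := gkAux_nsq u
  have hnv : ‖v‖^2 = v.re^2 + v.im^2 := gkAux_nsq v
  rw [gkAux_nsq]
  simp only [Complex.sub_re, Complex.sub_im, gkAux_smul_re, gkAux_smul_im] at *
  field_simp
  linear_combination (-‖u‖^4)*hnv - t^4*hnu

lemma gkAux_inner_le {u v : ℂ} : u.re*v.re + u.im*v.im ≤ ‖u‖ * ‖v‖ := by
  have hnu : ‖u‖^2 = u.re^2 + u.im^2 := gkAux_nsq u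
  have hnv : ‖v‖^2 = v.re^2 + v.im^2 := gkAux_nsq v
  have h1 : (u.re*v.re + u.im*v.im)^2 ≤ (‖u‖*‖v‖)^2 := by
    nlinarith [sq_nonneg (u.re*v.im - u.im*v.re)]
  nlinarith [mul_nonneg (norm_nonneg u) (norm_nonneg v)]

lemma gkAux_N_pos {t : ℝ} (ht : 0 < t) {u v : ℂ} (hu : u ≠ 0) (h : ‖u‖ * ‖v‖ < t^2) :
    0 < ‖(t/‖u‖) • u - (‖u‖/t) • v‖ := by
  have h2 := gkAux_Nsq ht hu v
  have h3 : (0:ℝ) < t^2 - 2*(u.re*v.re + u.im*v.im) + ‖u‖^2*‖v‖^2/t^2 := by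
    have h4 : ‖u‖^2*‖v‖^2/t^2 = (‖u‖*‖v‖/t)^2 := by field_simp
    rw [h4]
    have hmt : ‖u‖*‖v‖/t < t := by rw [div_lt_iff₀ ht]; nlinarith
    have hq : t * (‖u‖*‖v‖/t) = ‖u‖*‖v‖ := by field_simp
    nlinarith [gkAux_inner_le (u := u) (v := v),
      mul_pos (sub_pos.mpr hmt) (sub_pos.mpr hmt)]
  have h5 : ‖(t/‖u‖) • u - (‖u‖/t) • v‖ ≠ 0 := by
    intro h0
    rw [h0] at h2
    simp only [ne_eq, OfNat.ofNat_ne_zero, not_false_eq_true, zero_pow] at h2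
    linarith
  exact lt_of_le_of_ne (norm_nonneg _) (Ne.symm h5)

lemma gkAux_N_mono {R T : ℝ} (hR : 0 < R) (hT : R < T) {u v : ℂ} (hu : u ≠ 0)
    (h1 : ‖u‖ < R) (h2 : ‖v‖ < R) :
    ‖(R/‖u‖) • u - (‖u‖/R) • v‖ < ‖(T/‖u‖) • u - (‖u‖/T) • v‖ := by
  have ht0 : 0 < T := lt_trans hR hT
  have hnw : ‖u‖ * ‖v‖ < R^2 := by
    nlinarith [norm_nonneg u, norm_nonneg v, norm_pos_iff.mpr hu]
  have hnwT : ‖u‖ * ‖v‖ < T^2 := by nlinarith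
  have hA := gkAux_Nsq hR hu v
  have hB := gkAux_Nsq ht0 hu v
  have hPA := gkAux_N_pos hR hu hnw
  have hPB := gkAux_N_pos ht0 hu hnwT
  have hsq : ‖(R/‖u‖) • u - (‖u‖/R) • v‖^2 < ‖(T/‖u‖) • u - (‖u‖/T) • v‖^2 := by
    rw [hA, hB]
    have e1 : ‖u‖^2*‖v‖^2/T^2 - ‖u‖^2*‖v‖^2/R^2
        = -((T^2-R^2) * (‖u‖*‖v‖)^2/(R^2*T^2)) := by field_simp; ring
    have e2 : (T^2-R^2) * (‖u‖*‖v‖)^2/(R^2*T^2) < T^2 - R^2 := by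
      rw [div_lt_iff₀ (by positivity)]
      have hx : (‖u‖*‖v‖)^2 < R^2*T^2 := by
        nlinarith [mul_nonneg (norm_nonneg u) (norm_nonneg v)]
      have hTR : (0:ℝ) < T^2 - R^2 := by nlinarith
      exact mul_lt_mul_of_pos_left hx hTR
    linarith [e1, e2]
  nlinarith [hPA, hPB, hsq]

lemma gkAux_kernel_lt {R T : ℝ} (hR : 0 < R) (hT : R < T) {u v : ℂ} (hu : u ≠ 0)
    (h1 : ‖u‖ < R) (h2 : ‖v‖ < R) : greenKernel R u v < greenKernel T u v := by
  have ht0 : 0 < T := lt_trans hR hT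
  have hnw : ‖u‖ * ‖v‖ < R^2 := by
    nlinarith [norm_nonneg u, norm_nonneg v, norm_pos_iff.mpr hu]
  have hPA := gkAux_N_pos hR hu hnw
  have hPB := gkAux_N_pos ht0 hu (by nlinarith : ‖u‖ * ‖v‖ < T^2)
  unfold greenKernel
  simp only [one_div, Real.log_inv]
  have := Real.log_lt_log hPA (gkAux_N_mono hR hT hu h1 h2)
  linarith

lemma gkAux_kernel_nonneg {R : ℝ} (hR : 0 < R) {u v : ℂ} (hu : u ≠ 0) (huv : u ≠ v)
    (h1 : ‖u‖ < R) (h2 : ‖v‖ < R) : 0 ≤ greenKernel R u v := by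
  have hnw : ‖u‖ * ‖v‖ < R^2 := by
    nlinarith [norm_nonneg u, norm_nonneg v, norm_pos_iff.mpr hu]
  have hPA := gkAux_N_pos hR hu hnw
  have hd : (0:ℝ) < ‖u - v‖ := by
    rw [norm_pos_iff]; exact sub_ne_zero.mpr huv
  have hA := gkAux_Nsq hR hu v
  have hduv : ‖u - v‖^2 = ‖u‖^2 - 2*(u.re*v.re + u.im*v.im) + ‖v‖^2 := by
    rw [gkAux_nsq]
    simp only [Complex.sub_re, Complex.sub_im]
    nlinarith [gkAux_nsq u, gkAux_nsq v]
  have hle : ‖u - v‖ ≤ ‖(R/‖u‖) • u - (‖u‖/R) • v‖ := by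
    have hsq : ‖u - v‖^2 ≤ ‖(R/‖u‖) • u - (‖u‖/R) • v‖^2 := by
      rw [hA, hduv]
      have key : (R^2 - ‖u‖^2) * (R^2 - ‖v‖^2) / R^2
          = R^2 - ‖u‖^2 - ‖v‖^2 + ‖u‖^2*‖v‖^2/R^2 := by field_simp; ring
      have hp1 : (0:ℝ) < R^2 - ‖u‖^2 := by nlinarith [norm_nonneg u]
      have hp2 : (0:ℝ) < R^2 - ‖v‖^2 := by nlinarith [norm_nonneg v]
      have hp3 : (0:ℝ) < (R^2 - ‖u‖^2) * (R^2 - ‖v‖^2) / R^2 := by positivity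
      linarith
    nlinarith [norm_nonneg (u - v), norm_nonneg ((R/‖u‖) • u - (‖u‖/R) • v)]
  unfold greenKernel
  simp only [one_div, Real.log_inv]
  have := Real.log_le_log hd hle
  linarith

lemma gkAux_kernel_zero (R T : ℝ) (v : ℂ) : greenKernel R 0 v = greenKernel T 0 v := by
  unfold greenKernel
  simp

lemma gkAux_kernel_scale {R s : ℝ} (hR : 0 < R) (hs : 1 ≤ s) {u v : ℂ} (hu : u ≠ 0)
    (huv : u ≠ v) (h1 : ‖u‖ < R) (h2 : ‖v‖ < R) :
    greenKernel R (s⁻¹ • u) (s⁻¹ • v) = greenKernel (s*R) u v := by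
  have hs0 : 0 < s := lt_of_lt_of_le one_pos hs
  have hn : 0 < ‖u‖ := norm_pos_iff.mpr hu
  have hns : ‖s⁻¹ • u‖ = s⁻¹ * ‖u‖ := by
    rw [norm_smul, Real.norm_eq_abs, abs_of_pos (by positivity)]
  have hvec : (R/‖s⁻¹ • u‖) • (s⁻¹ • u) - (‖s⁻¹ • u‖/R) • (s⁻¹ • v)
      = s⁻¹ • ((s*R/‖u‖) • u - (‖u‖/(s*R)) • v) := by
    have c1 : (R/(s⁻¹*‖u‖)) * s⁻¹ = s⁻¹ * (s*R/‖u‖) := by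
      field_simp [hn.ne', hs0.ne']
    have c2 : (s⁻¹*‖u‖/R) * s⁻¹ = s⁻¹ * (‖u‖/(s*R)) := by
      field_simp [hn.ne', hs0.ne', hR.ne']
      all_goals try ring
      all_goals simp
    rw [hns, smul_sub, smul_smul, smul_smul, smul_smul, smul_smul, c1, c2]
  have hd : (0:ℝ) < ‖u - v‖ := by rw [norm_pos_iff]; exact sub_ne_zero.mpr huv
  have hs2 : 1 ≤ s^2 := by nlinarith
  have hnw1 : ‖u‖ * ‖v‖ < R^2 := by nlinarith [norm_nonneg u, norm_nonneg v, hn]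
  have hnw : ‖u‖ * ‖v‖ < (s*R)^2 := by nlinarith [sq_nonneg R]
  have hPB := gkAux_N_pos (by positivity : (0:ℝ) < s*R) hu hnw
  unfold greenKernel
  rw [hvec]
  have hsub : s⁻¹ • u - s⁻¹ • v = s⁻¹ • (u - v) := by rw [smul_sub]
  rw [hsub, norm_smul, norm_smul, Real.norm_eq_abs,
    abs_of_pos (by positivity : (0:ℝ) < s⁻¹)]
  simp only [one_div, Real.log_inv]
  rw [Real.log_mul (by positivity) (ne_of_gt hd), Real.log_mul (by positivity) (ne_of_gt hPB)]
  ring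

instance : Measure.IsAddHaarMeasure (volume : Measure (ℂ × ℂ)) := by
  rw [Measure.volume_eq_prod]; infer_instance

lemma gkAux_finrank : Module.finrank ℝ (ℂ × ℂ) = 4 := by
  simp [Module.finrank_prod, Complex.finrank_real_complex]

lemma gkAux_Z1 : volume {p : ℂ × ℂ | p.1 = 0} = 0 := by
  have h : {p : ℂ × ℂ | p.1 = 0} = ({0} : Set ℂ) ×ˢ (Set.univ : Set ℂ) := by
    ext ⟨a, b⟩; simp [eq_comm]
  rw [h, Measure.volume_eq_prod, Measure.prod_prod]
  simp

lemma gkAux_Z2 : volume {p : ℂ × ℂ | p.1 = p.2} = 0 := by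
  rw [Measure.volume_eq_prod]
  have hm : MeasurableSet {p : ℂ × ℂ | p.1 = p.2} :=
    measurableSet_eq_fun measurable_fst measurable_snd
  rw [Measure.prod_apply hm]
  have h : ∀ x : ℂ, (Prod.mk x ⁻¹' {p : ℂ × ℂ | p.1 = p.2}) = {x} := by
    intro x; ext y; simp [eq_comm]
  simp [h]

end Aux

/-- If `λ₁ > λ₂ > 0`, `φ₂` radial and supported in `D_R` is not (a.e.) zero,
and `φ̃₂(x) = λ̃ φ₂(√λ̃ x)` with `λ̃ = λ₁/λ₂ > 1`, then the Green energy of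
`φ̃₂` strictly exceeds that of `φ₂`. -/
theorem green_energy_scaling_strict (R l₁ l₂ : ℝ) (hR : 0 < R)
    (hl₂ : 0 < l₂) (hl : l₂ < l₁) (φ : ℂ → ℝ)
    (hrad : ∀ a b : ℂ, ‖a‖ = ‖b‖ → φ a = φ b)
    (hsupp : Function.support φ ⊆ ball (0 : ℂ) R)
    (hne : ¬ (∀ᵐ x : ℂ ∂volume, φ x = 0))
    (hint0 : IntegrableOn (fun x => φ x ^ 2) (ball (0 : ℂ) R))
    (φt : ℂ → ℝ)
    (hφt : φt = fun x => (l₁ / l₂) * φ (Real.sqrt (l₁ / l₂) • x))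
    (hint1 : IntegrableOn
      (fun p : ℂ × ℂ => greenKernel R p.1 p.2 * φ p.1 ^ 2 * φ p.2 ^ 2)
      (ball (0 : ℂ) R ×ˢ ball (0 : ℂ) R))
    (hint2 : IntegrableOn
      (fun p : ℂ × ℂ => greenKernel R p.1 p.2 * φt p.1 ^ 2 * φt p.2 ^ 2)
      (ball (0 : ℂ) R ×ˢ ball (0 : ℂ) R)) :
    (∫ x in ball (0 : ℂ) R, ∫ y in ball (0 : ℂ) R,
        greenKernel R x y * φ x ^ 2 * φ y ^ 2)
      < ∫ x in ball (0 : ℂ) R, ∫ y in ball (0 : ℂ) R,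
          greenKernel R x y * φt x ^ 2 * φt y ^ 2 := by
  classical
  subst hφt
  set lt : ℝ := l₁ / l₂ with hltdef
  have hlt1 : 1 < lt := (one_lt_div hl₂).mpr hl
  have hlt0 : 0 < lt := lt_trans one_pos hlt1
  set s : ℝ := Real.sqrt lt with hsdef
  have hs1 : 1 < s := by
    rw [hsdef, ← Real.sqrt_one]
    exact Real.sqrt_lt_sqrt zero_le_one hlt1
  have hs0 : 0 < s := lt_trans one_pos hs1
  have hssq : s^2 = lt := Real.sq_sqrt hlt0.le
  set B : Set ℂ := ball (0 : ℂ) R with hBdef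
  -- the three product functions
  set F2 : ℂ × ℂ → ℝ := fun p => greenKernel R p.1 p.2 * φ p.1 ^ 2 * φ p.2 ^ 2 with hF2
  set Ft : ℂ × ℂ → ℝ :=
    fun p => greenKernel R p.1 p.2 * (lt * φ (s • p.1)) ^ 2 * (lt * φ (s • p.2)) ^ 2 with hFt
  set F1 : ℂ × ℂ → ℝ := fun p => greenKernel (s*R) p.1 p.2 * φ p.1 ^ 2 * φ p.2 ^ 2 with hF1
  -- membership facts
  have hmem : ∀ x : ℂ, φ x ≠ 0 → ‖x‖ < R := by
    intro x hx
    have := hsupp (Function.mem_support.mpr hx)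
    rwa [mem_ball_zero_iff] at this
  have hmemt : ∀ x : ℂ, φ (s • x) ≠ 0 → ‖x‖ < R := by
    intro x hx
    have h1 := hmem _ hx
    rw [norm_smul, Real.norm_eq_abs, abs_of_pos hs0] at h1
    nlinarith [norm_nonneg x]
  -- supports
  have hsupp2 : Function.support F2 ⊆ B ×ˢ B := by
    intro p hp
    rw [Function.mem_support] at hp
    rw [Set.mem_prod, hBdef, mem_ball_zero_iff, mem_ball_zero_iff]
    constructor
    · refine hmem _ fun h0 => hp ?_
      simp [hF2, h0]
    · refine hmem _ fun h0 => hp ?_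
      simp [hF2, h0]
  have hsuppt : Function.support Ft ⊆ B ×ˢ B := by
    intro p hp
    rw [Function.mem_support] at hp
    rw [Set.mem_prod, hBdef, mem_ball_zero_iff, mem_ball_zero_iff]
    constructor
    · refine hmemt _ fun h0 => hp ?_
      simp only [hFt]; rw [h0]; ring
    · refine hmemt _ fun h0 => hp ?_
      simp only [hFt]; rw [h0]; ring
  -- integrability
  have hI2 : Integrable F2 := (integrableOn_iff_integrable_of_support_subset hsupp2).mp hint1
  have hIt : Integrable Ft := (integrableOn_iff_integrable_of_support_subset hsuppt).mp hint2
  -- the a.e. full set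
  have hZae : ∀ᵐ p : ℂ × ℂ ∂volume,
      p ∉ ({p : ℂ × ℂ | p.1 = 0} ∪ {p : ℂ × ℂ | p.1 = p.2}) :=
    measure_eq_zero_iff_ae_notMem.mp (measure_union_null gkAux_Z1 gkAux_Z2)
  -- scaling identity a.e.
  have hae : ∀ᵐ p : ℂ × ℂ ∂volume, Ft (s⁻¹ • p) = lt^4 * F1 p := by
    filter_upwards [hZae] with p hp
    simp only [Set.mem_union, Set.mem_setOf_eq, not_or] at hp
    obtain ⟨hp1, hp2⟩ := hp
    have hφs : ∀ x : ℂ, φ (s • s⁻¹ • x) = φ x := by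
      intro x
      rw [smul_smul, mul_inv_cancel₀ hs0.ne', one_smul]
    have hsmul1 : (s⁻¹ • p).1 = s⁻¹ • p.1 := rfl
    have hsmul2 : (s⁻¹ • p).2 = s⁻¹ • p.2 := rfl
    rw [hFt, hF1]
    simp only [hsmul1, hsmul2, hφs]
    by_cases h1 : φ p.1 = 0
    · simp [h1]
    by_cases h2 : φ p.2 = 0
    · simp [h2]
    have hk := gkAux_kernel_scale hR hs1.le hp1 hp2 (hmem _ h1) (hmem _ h2)
    rw [hk]
    ring
  -- change of variables
  have hrank4 : Module.finrank ℝ (ℂ × ℂ) = 4 := gkAux_finrank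
  have hcv := Measure.integral_comp_inv_smul_of_nonneg (volume : Measure (ℂ × ℂ)) Ft hs0.le
  rw [hrank4] at hcv
  have hIcomp : Integrable (fun p : ℂ × ℂ => Ft (s⁻¹ • p)) :=
    (MeasureTheory.integrable_comp_smul_iff volume Ft (inv_ne_zero hs0.ne')).mpr hIt
  have hI1 : Integrable F1 := by
    have h := hIcomp.congr hae
    have h2 := h.const_mul (lt^4)⁻¹
    have h3 : (fun p : ℂ × ℂ => (lt^4)⁻¹ * (lt^4 * F1 p)) = F1 := by
      funext p
      rw [← mul_assoc, inv_mul_cancel₀ (pow_ne_zero 4 hlt0.ne'), one_mul]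
    rwa [h3] at h2
  have hEq : ∫ p : ℂ × ℂ, Ft p = lt^2 * ∫ p : ℂ × ℂ, F1 p := by
    have e3 : ∫ p : ℂ × ℂ, Ft (s⁻¹ • p) = lt^4 * ∫ p : ℂ × ℂ, F1 p := by
      rw [integral_congr_ae hae, integral_const_mul]
    rw [e3, smul_eq_mul] at hcv
    have hs4 : s^4 = lt^2 := by rw [← hssq]; ring
    rw [hs4] at hcv
    have h6 : lt^2 * (lt^2 * ∫ p : ℂ × ℂ, F1 p) = lt^2 * ∫ p : ℂ × ℂ, Ft p := by
      rw [← hcv]; ring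
    exact (mul_left_cancel₀ (pow_ne_zero 2 hlt0.ne') h6).symm
  -- identify the iterated integrals
  have hint1' : IntegrableOn F2 (B ×ˢ B) (volume.prod volume) := by
    rw [← Measure.volume_eq_prod]; exact hint1
  have hint2' : IntegrableOn Ft (B ×ˢ B) (volume.prod volume) := by
    rw [← Measure.volume_eq_prod]; exact hint2
  have eL : (∫ x in B, ∫ y in B, greenKernel R x y * φ x ^ 2 * φ y ^ 2)
      = ∫ p : ℂ × ℂ, F2 p := by
    have h := setIntegral_prod (μ := volume) (ν := volume) F2 hint1'
    rw [← Measure.volume_eq_prod] at h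
    have h2 : ∫ p : ℂ × ℂ in B ×ˢ B, F2 p = ∫ p : ℂ × ℂ, F2 p :=
      setIntegral_eq_integral_of_forall_compl_eq_zero fun p hp => by
        by_contra h0
        exact hp (hsupp2 (Function.mem_support.mpr h0))
    exact h.symm.trans h2
  have eR : (∫ x in B, ∫ y in B,
        greenKernel R x y * (lt * φ (s • x)) ^ 2 * (lt * φ (s • y)) ^ 2)
      = ∫ p : ℂ × ℂ, Ft p := by
    have h := setIntegral_prod (μ := volume) (ν := volume) Ft hint2'
    rw [← Measure.volume_eq_prod] at h
    have h2 : ∫ p : ℂ × ℂ in B ×ˢ B, Ft p = ∫ p : ℂ × ℂ, Ft p :=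
      setIntegral_eq_integral_of_forall_compl_eq_zero fun p hp => by
        by_contra h0
        exact hp (hsuppt (Function.mem_support.mpr h0))
    exact h.symm.trans h2
  -- the difference function
  have hRsR : R < s * R := by nlinarith
  have hg_nonneg : ∀ p : ℂ × ℂ, 0 ≤ F1 p - F2 p := by
    intro p
    by_cases h1 : φ p.1 = 0
    · simp [hF1, hF2, h1]
    by_cases h2 : φ p.2 = 0
    · simp [hF1, hF2, h2]
    by_cases h0 : p.1 = 0
    · rw [hF1, hF2]
      simp only [h0]
      rw [gkAux_kernel_zero R (s*R) p.2]
      simp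
    · have hk := gkAux_kernel_lt hR hRsR h0 (hmem _ h1) (hmem _ h2)
      have hnn := mul_nonneg (sub_pos.mpr hk).le
        (mul_nonneg (sq_nonneg (φ p.1)) (sq_nonneg (φ p.2)))
      have he : F1 p - F2 p = (greenKernel (s*R) p.1 p.2 - greenKernel R p.1 p.2)
          * (φ p.1 ^ 2 * φ p.2 ^ 2) := by rw [hF1, hF2]; ring
      rw [he]
      exact hnn
  have hg_int : Integrable (fun p : ℂ × ℂ => F1 p - F2 p) := hI1.sub hI2
  -- positivity of the support measure
  have hφpos : 0 < volume (Function.support φ) := by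
    rw [ae_iff] at hne
    have h : {x : ℂ | ¬ φ x = 0} = Function.support φ := rfl
    rw [h] at hne
    exact pos_iff_ne_zero.mpr hne
  have hgpos : 0 < ∫ p : ℂ × ℂ, (F1 p - F2 p) := by
    rw [integral_pos_iff_support_of_nonneg_ae (ae_of_all _ hg_nonneg) hg_int]
    have hsub : ((Function.support φ \ {0}) ×ˢ Function.support φ)
        ⊆ Function.support fun p : ℂ × ℂ => F1 p - F2 p := by
      rintro ⟨u, v⟩ ⟨⟨hu1, hu2⟩, hv⟩
      rw [Function.mem_support] at hu1 hv ⊢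
      have hu0 : u ≠ 0 := by simpa using hu2
      have hk := gkAux_kernel_lt hR hRsR hu0 (hmem _ hu1) (hmem _ hv)
      have ha : (0:ℝ) < (φ u)^2 := lt_of_le_of_ne (sq_nonneg _) (Ne.symm (pow_ne_zero 2 hu1))
      have hb : (0:ℝ) < (φ v)^2 := lt_of_le_of_ne (sq_nonneg _) (Ne.symm (pow_ne_zero 2 hv))
      have hpos : 0 < (greenKernel (s*R) u v - greenKernel R u v) * ((φ u)^2 * (φ v)^2) :=
        mul_pos (sub_pos.mpr hk) (mul_pos ha hb)
      have he : F1 (u, v) - F2 (u, v)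
          = (greenKernel (s*R) u v - greenKernel R u v) * ((φ u)^2 * (φ v)^2) := by
        rw [hF1, hF2]; ring
      rw [he]
      exact ne_of_gt hpos
    refine lt_of_lt_of_le ?_ (measure_mono hsub)
    rw [Measure.volume_eq_prod, Measure.prod_prod,
      measure_diff_null (measure_singleton (0 : ℂ))]
    exact ENNReal.mul_pos hφpos.ne' hφpos.ne'
  -- nonnegativity of the base energy
  have hE2 : 0 ≤ ∫ p : ℂ × ℂ, F2 p := by
    apply integral_nonneg_of_ae
    filter_upwards [hZae] with p hp
    simp only [Set.mem_union, Set.mem_setOf_eq, not_or] at hp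
    obtain ⟨hp1, hp2⟩ := hp
    by_cases h1 : φ p.1 = 0
    · simp [hF2, h1]
    by_cases h2 : φ p.2 = 0
    · simp [hF2, h2]
    have hk := gkAux_kernel_nonneg hR hp1 hp2 (hmem _ h1) (hmem _ h2)
    rw [hF2]
    exact mul_nonneg (mul_nonneg hk (sq_nonneg _)) (sq_nonneg _)
  -- conclude
  rw [eL, eR, hEq]
  have h7 : ∫ p : ℂ × ℂ, F2 p < ∫ p : ℂ × ℂ, F1 p := by
    have hsub := integral_sub hI1 hI2
    have : ∫ p : ℂ × ℂ, (F1 p - F2 p)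
        = (∫ p : ℂ × ℂ, F1 p) - ∫ p : ℂ × ℂ, F2 p := hsub
    linarith
  have h8 : 0 < ∫ p : ℂ × ℂ, F1 p := lt_of_le_of_lt hE2 h7
  have h9 : (1:ℝ) < lt^2 := by nlinarith
  have h10 : (1:ℝ) * (∫ p : ℂ × ℂ, F1 p) < lt^2 * ∫ p : ℂ × ℂ, F1 p :=
    mul_lt_mul_of_pos_right h9 h8
  linarith
end
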